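/- arXiv:math/0606636 — 3 statements merged into one kernel-verified Lean document; each statement's English description precedes it below -/
import Mathlib

section
/- Let R be a PVMD which is Clifford t-regular and let I be a nonzero fractional ideal of R. Then I is t-invertible if and only if I is t-locally principal, i.e., I R_M is a principal fractional ideal of R_M for every t-maximal ideal M of R. -/
open Pointwise

/-- The `v`-closure (divisorial closure) of a submodule `I` of the `R`-algebra `K`:
`I_v = (R : (R : I)) = 1 / (1 / I)`. -/
noncomputable def vOp (R : Type*) [CommRing R] (K : Type*) [CommRing K] [Algebra R K]
    (I : Submodule R K) : Submodule R K :=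
  1 / (1 / I)

/-- The `t`-closure of a submodule `I` of the `R`-algebra `K`:
`I_t = ∪ J_v`, `J` ranging over the nonzero finitely generated submodules contained in `I`. -/
noncomputable def tOp (R : Type*) [CommRing R] (K : Type*) [CommRing K] [Algebra R K]
    (I : Submodule R K) : Submodule R K :=
  ⨆ J ∈ {J : Submodule R K | J ≠ ⊥ ∧ J.FG ∧ J ≤ I}, vOp R K J

variable (R : Type*) [CommRing R]

/-- The image of an integral ideal of `R` in the fraction field of `R`. -/
noncomputable def idealToFrac (I : Ideal R) : Submodule R (FractionRing R) :=
  Submodule.map (Algebra.linearMap R (FractionRing R)) I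

/-- An integral ideal of `R` is a `t`-ideal if it is `t`-closed. -/
noncomputable def IsTIdeal (I : Ideal R) : Prop :=
  tOp R (FractionRing R) (idealToFrac R I) = idealToFrac R I

/-- A (nonzero) `t`-prime ideal: a nonzero prime ideal which is a `t`-ideal. -/
structure IsTPrime (P : Ideal R) : Prop where
  ne_bot : P ≠ ⊥
  isPrime : P.IsPrime
  isT : IsTIdeal R P

/-- A `t`-maximal ideal: an ideal maximal among proper integral `t`-ideals
(such an ideal is necessarily nonzero and prime). -/
structure IsTMaximal (M : Ideal R) : Prop where
  ne_bot : M ≠ ⊥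
  ne_top : M ≠ ⊤
  isPrime : M.IsPrime
  isT : IsTIdeal R M
  isMax : ∀ J : Ideal R, J ≠ ⊤ → IsTIdeal R J → M ≤ J → J = M

/-- A nonzero fractional ideal of `R` (as a submodule of the fraction field). -/
def IsFracIdeal (I : Submodule R (FractionRing R)) : Prop :=
  I ≠ ⊥ ∧ IsFractional (nonZeroDivisors R) I

/-- A nonzero fractional `t`-ideal of `R`. -/
noncomputable def IsTFracIdeal (I : Submodule R (FractionRing R)) : Prop :=
  IsFracIdeal R I ∧ tOp R (FractionRing R) I = I

/-- `I` is `t`-invertible: `(I I⁻¹)_t = R`. -/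
noncomputable def IsTInvertible (I : Submodule R (FractionRing R)) : Prop :=
  tOp R (FractionRing R) (I * ((1 : Submodule R (FractionRing R)) / I)) = 1

/-- The isomorphy class of the fractional `t`-ideal `I` is (von Neumann) regular in the
`t`-class semigroup `S_t(R)`: there are a fractional `t`-ideal `J` and a nonzero `c` in the
fraction field with `(I·I·J)_t = c I`, i.e. `x² a = x` for `x = [I]`, `a = [J]` in `S_t(R)`. -/
noncomputable def TClassRegular (I : Submodule R (FractionRing R)) : Prop :=
  ∃ J : Submodule R (FractionRing R), IsTFracIdeal R J ∧
    ∃ c : FractionRing R, c ≠ 0 ∧ tOp R (FractionRing R) (I * I * J) = c • I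

/-- `R` is Clifford `t`-regular: every element of `S_t(R)` is von Neumann regular. -/
noncomputable def IsCliffordTRegular : Prop :=
  ∀ I : Submodule R (FractionRing R), IsTFracIdeal R I → TClassRegular R I

/-- `R` is Boole `t`-regular: every element of `S_t(R)` is idempotent, i.e. `(I²)_t ≅ I`. -/
noncomputable def IsBooleTRegular : Prop :=
  ∀ I : Submodule R (FractionRing R), IsTFracIdeal R I →
    ∃ c : FractionRing R, c ≠ 0 ∧ tOp R (FractionRing R) (I * I) = c • I

/-- `R` is Clifford regular: every element of the class semigroup `S(R)` is regular. -/
def IsCliffordRegular : Prop :=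
  ∀ I : Submodule R (FractionRing R), IsFracIdeal R I →
    ∃ J : Submodule R (FractionRing R), IsFracIdeal R J ∧
      ∃ c : FractionRing R, c ≠ 0 ∧ I * I * J = c • I

/-- `R` is Boole regular: every element of the class semigroup `S(R)` is idempotent. -/
def IsBooleRegular : Prop :=
  ∀ I : Submodule R (FractionRing R), IsFracIdeal R I →
    ∃ c : FractionRing R, c ≠ 0 ∧ I * I = c • I

/-- `R` is a Prüfer `v`-multiplication domain: the localization at every `t`-maximal ideal is
a valuation domain. -/
noncomputable def IsPVMD [IsDomain R] : Prop :=
  ∀ M : Ideal R, ∀ hM : IsTMaximal R M,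
    haveI := hM.isPrime
    haveI : IsDomain (Localization.AtPrime M) :=
      IsLocalization.isDomain_of_local_atPrime hM.isPrime
    ValuationRing (Localization.AtPrime M)

/-- `R` is `t`-almost Dedekind: the localization at every `t`-maximal ideal is a rank-one
discrete valuation ring. -/
noncomputable def IsTAlmostDedekind [IsDomain R] : Prop :=
  ∀ M : Ideal R, ∀ hM : IsTMaximal R M,
    haveI := hM.isPrime
    haveI : IsDomain (Localization.AtPrime M) :=
      IsLocalization.isDomain_of_local_atPrime hM.isPrime
    IsDiscreteValuationRing (Localization.AtPrime M)

/-- `R` is strongly `t`-discrete: `(P²)_t ⊊ P` for every `t`-prime ideal `P`, i.e. there are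
no `t`-idempotent `t`-prime ideals. -/
noncomputable def IsStronglyTDiscrete : Prop :=
  ∀ P : Ideal R, IsTPrime R P →
    tOp R (FractionRing R) (idealToFrac R (P * P)) < idealToFrac R P

/-- `R` is completely integrally closed (in its fraction field). -/
def IsCompletelyIntegrallyClosed : Prop :=
  ∀ x : FractionRing R,
    (∃ c : R, c ≠ 0 ∧ ∀ n : ℕ, ∃ r : R,
      algebraMap R (FractionRing R) c * x ^ n = algebraMap R (FractionRing R) r) →
    ∃ r : R, algebraMap R (FractionRing R) r = x

/-- `R` is a Krull domain, via the classical characterization: every nonzero integral ideal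
is `t`-invertible. -/
noncomputable def IsKrull : Prop :=
  ∀ I : Ideal R, I ≠ ⊥ → IsTInvertible R (idealToFrac R I)

/-- `R` is a Prüfer domain: every nonzero finitely generated ideal is invertible. -/
noncomputable def IsPrufer : Prop :=
  ∀ I : Ideal R, I ≠ ⊥ → I.FG →
    idealToFrac R I * ((1 : Submodule R (FractionRing R)) / idealToFrac R I) = 1

/-- `R` has finite character: every nonzero nonunit lies in only finitely many maximal ideals. -/
def HasFiniteCharacter : Prop :=
  ∀ x : R, x ≠ 0 → ¬ IsUnit x → {M : Ideal R | M.IsMaximal ∧ x ∈ M}.Finite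

/-- `R` has finite `t`-character: every nonzero nonunit lies in only finitely many
`t`-maximal ideals. -/
noncomputable def HasFiniteTCharacter : Prop :=
  ∀ x : R, x ≠ 0 → ¬ IsUnit x → {M : Ideal R | IsTMaximal R M ∧ x ∈ M}.Finite

/-- A Krull-type domain: a PVMD of finite `t`-character. -/
noncomputable def IsKrullType [IsDomain R] : Prop :=
  IsPVMD R ∧ HasFiniteTCharacter R

/-- `R` is pseudo-integrally closed: `(I_t : I_t) = R` for every nonzero finitely generated
integral ideal `I` (equivalently, `R = ∪ (I_t : I_t)`). -/
noncomputable def IsPseudoIntegrallyClosed : Prop :=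
  ∀ I : Ideal R, I ≠ ⊥ → I.FG →
    tOp R (FractionRing R) (idealToFrac R I) / tOp R (FractionRing R) (idealToFrac R I) = 1

/-- The localization `I R_S` of a submodule `I` of the `R`-algebra `K` at a multiplicative
subset `S` of `R`, as a subset of `K`: the set of `x` with `s x ∈ I` for some `s ∈ S`. -/
def locSub (S : Submonoid R) {K : Type*} [CommRing K] [Algebra R K]
    (I : Submodule R K) : Submodule R K where
  carrier := {x : K | ∃ s ∈ S, (s : R) • x ∈ I}
  zero_mem' := ⟨1, S.one_mem, by simp⟩
  add_mem' := by
    rintro a b ⟨s, hs, ha⟩ ⟨t, ht, hb⟩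
    refine ⟨s * t, S.mul_mem hs ht, ?_⟩
    rw [smul_add]
    exact Submodule.add_mem _
      (by rw [mul_comm, mul_smul]; exact I.smul_mem t ha)
      (by rw [mul_smul]; exact I.smul_mem s hb)
  smul_mem' := by
    rintro r x ⟨s, hs, hx⟩
    exact ⟨s, hs, by rw [smul_comm]; exact I.smul_mem r hx⟩

/-- `M ∈ T_t(R)`: `M` is a `t`-maximal ideal such that `R_M` does not contain
`∩_{N ≠ M} R_N` (all viewed inside the fraction field). -/
noncomputable def InTt (M : Ideal R) : Prop :=
  ∃ hM : IsTMaximal R M,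
    ¬ ((⨅ N : {N : Ideal R // IsTMaximal R N ∧ N ≠ M},
          locSub R (@Ideal.primeCompl R _ N.1 N.2.1.isPrime)
            (1 : Submodule R (FractionRing R))) ≤
        locSub R (@Ideal.primeCompl R _ M hM.isPrime) (1 : Submodule R (FractionRing R)))

/-- The overring `(A : A)` of all multipliers of `A`, as a subalgebra of the fraction field. -/
noncomputable def stabRing (A : Submodule R (FractionRing R)) :
    Subalgebra R (FractionRing R) :=
  Submodule.toSubalgebra (A / A)
    (Submodule.mem_div_iff_forall_mul_mem.2 fun y hy => by rwa [one_mul])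
    (fun x y hx hy => Submodule.mem_div_iff_forall_mul_mem.2 fun z hz => by
      rw [mul_assoc]
      exact Submodule.mem_div_iff_forall_mul_mem.1 hx _
        (Submodule.mem_div_iff_forall_mul_mem.1 hy _ hz))


namespace KM


set_option linter.unusedSectionVars false

variable {R : Type*} [CommRing R] [IsDomain R]

local notation "K" => FractionRing R
local notation "ι" => algebraMap R (FractionRing R)

lemma one_div_le {I J : Submodule R K} (h : I ≤ J) : 1 / J ≤ 1 / I := by
  intro x hx
  rw [Submodule.mem_div_iff_forall_mul_mem] at hx ⊢
  exact fun y hy => hx y (h hy)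

lemma le_vOp (I : Submodule R K) : I ≤ vOp R K I := by
  intro x hx
  rw [vOp, Submodule.mem_div_iff_forall_mul_mem]
  intro y hy
  rw [Submodule.mem_div_iff_forall_mul_mem] at hy
  rw [mul_comm]; exact hy x hx

lemma vOp_mono {I J : Submodule R K} (h : I ≤ J) : vOp R K I ≤ vOp R K J :=
  one_div_le (one_div_le h)

lemma one_div_vOp (I : Submodule R K) : 1 / vOp R K I = 1 / I := by
  refine le_antisymm (one_div_le (le_vOp I)) ?_
  intro x hx
  rw [Submodule.mem_div_iff_forall_mul_mem]
  intro y hy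
  rw [vOp, Submodule.mem_div_iff_forall_mul_mem] at hy
  rw [mul_comm]; exact hy x hx

lemma vOp_vOp (I : Submodule R K) : vOp R K (vOp R K I) = vOp R K I := by
  rw [vOp, one_div_vOp]; rfl

lemma one_div_one : (1 : Submodule R K) / 1 = 1 := by
  refine le_antisymm ?_ ?_
  · intro x hx
    rw [Submodule.mem_div_iff_forall_mul_mem] at hx
    simpa using hx 1 (Submodule.one_le.1 le_rfl)
  · intro x hx
    rw [Submodule.mem_div_iff_forall_mul_mem]
    intro y hy
    obtain ⟨a, rfl⟩ := Submodule.mem_one.1 hx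
    obtain ⟨b, rfl⟩ := Submodule.mem_one.1 hy
    exact Submodule.mem_one.2 ⟨a * b, by rw [map_mul]⟩

lemma vOp_one : vOp R K (1 : Submodule R K) = 1 := by
  rw [vOp, one_div_one, one_div_one]

lemma vOp_mul_vOp_le (A B : Submodule R K) : vOp R K A * vOp R K B ≤ vOp R K (A * B) := by
  rw [Submodule.mul_le]
  intro a ha b hb
  rw [vOp, Submodule.mem_div_iff_forall_mul_mem]
  intro q hq
  rw [Submodule.mem_div_iff_forall_mul_mem] at hq
  have hqb : q * b ∈ 1 / A := by
    rw [Submodule.mem_div_iff_forall_mul_mem]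
    intro y hy
    have hqy : q * y ∈ 1 / B := by
      rw [Submodule.mem_div_iff_forall_mul_mem]
      intro z hz
      have := hq (y * z) (Submodule.mul_mem_mul hy hz)
      rwa [← mul_assoc] at this
    have := (Submodule.mem_div_iff_forall_mul_mem.1 hb) (q * y) hqy
    rwa [show b * (q * y) = q * b * y by ring] at this
  have := (Submodule.mem_div_iff_forall_mul_mem.1 ha) (q * b) hqb
  rwa [show a * (q * b) = a * b * q by ring] at this

-- smul lemmas
lemma mem_smulK {c : K} {S : Submodule R K} {x : K} :
    x ∈ c • S ↔ ∃ y ∈ S, c * y = x := by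
  rw [← SetLike.mem_coe, Submodule.coe_pointwise_smul, Set.mem_smul_set]
  simp [smul_eq_mul]

lemma smul_smulK (c d : K) (S : Submodule R K) : c • d • S = (c * d) • S := by
  rw [smul_smul]

lemma smulK_mono (c : K) {S T : Submodule R K} (h : S ≤ T) : c • S ≤ c • T :=
  Submodule.map_mono h

lemma one_div_smul {c : K} (hc : c ≠ 0) (I : Submodule R K) :
    1 / (c • I) = c⁻¹ • (1 / I) := by
  ext x
  rw [Submodule.mem_div_iff_forall_mul_mem, mem_smulK]
  constructor
  · intro h
    refine ⟨c * x, ?_, by field_simp⟩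
    rw [Submodule.mem_div_iff_forall_mul_mem]
    intro y hy
    have := h (c * y) (mem_smulK.2 ⟨y, hy, rfl⟩)
    rwa [show x * (c * y) = c * x * y by ring] at this
  · rintro ⟨y, hy, rfl⟩ z hz
    obtain ⟨w, hw, rfl⟩ := mem_smulK.1 hz
    rw [Submodule.mem_div_iff_forall_mul_mem] at hy
    have := hy w hw
    rwa [show c⁻¹ * y * (c * w) = (c⁻¹ * c) * (y * w) by ring,
      inv_mul_cancel₀ hc, one_mul]

lemma vOp_smul {c : K} (hc : c ≠ 0) (I : Submodule R K) :
    vOp R K (c • I) = c • vOp R K I := by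
  rw [vOp, one_div_smul hc, one_div_smul (inv_ne_zero hc), inv_inv, vOp]

lemma smul_mulK (c : K) (A B : Submodule R K) : (c • A) * B = c • (A * B) := by
  refine le_antisymm ?_ ?_
  · rw [Submodule.mul_le]
    intro x hx b hb
    obtain ⟨a, ha, rfl⟩ := mem_smulK.1 hx
    exact mem_smulK.2 ⟨a * b, Submodule.mul_mem_mul ha hb, by ring⟩
  · intro x hx
    obtain ⟨w, hw, rfl⟩ := mem_smulK.1 hx
    have hsub : A * B ≤ Submodule.comap (LinearMap.mul R K c) ((c • A) * B) := by
      rw [Submodule.mul_le]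
      intro a ha b hb
      simp only [Submodule.mem_comap, LinearMap.mul_apply']
      rw [show c * (a * b) = (c * a) * b by ring]
      exact Submodule.mul_mem_mul (mem_smulK.2 ⟨a, ha, rfl⟩) hb
    have := hsub hw
    simpa only [Submodule.mem_comap, LinearMap.mul_apply'] using this

lemma smulK_fg {c : K} {J : Submodule R K} (h : J.FG) : (c • J).FG :=
  h.map (DistribMulAction.toLinearMap R K c)

lemma smulK_ne_bot {c : K} {J : Submodule R K} (hc : c ≠ 0) (h : J ≠ ⊥) : c • J ≠ ⊥ := by
  intro hb
  apply h
  rw [Submodule.eq_bot_iff] at hb ⊢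
  intro y hy
  have hmem : c • y ∈ c • J := Submodule.smul_mem_pointwise_smul y c J hy
  have := hb _ hmem
  rw [smul_eq_mul] at this
  rcases mul_eq_zero.1 this with h' | h'
  · exact absurd h' hc
  · exact h'

lemma smulK_cancel {c : K} (hc : c ≠ 0) {A B : Submodule R K} (h : c • A = c • B) : A = B := by
  have := congrArg (fun S => c⁻¹ • S) h
  simpa [smul_smul, inv_mul_cancel₀ hc] using this

-- tOp lemmas
lemma vOp_le_tOp {J I : Submodule R K} (h1 : J ≠ ⊥) (h2 : J.FG) (h3 : J ≤ I) :
    vOp R K J ≤ tOp R K I := by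
  rw [tOp]
  exact le_biSup _ (show J ∈ {J : Submodule R K | J ≠ ⊥ ∧ J.FG ∧ J ≤ I} from ⟨h1, h2, h3⟩)

lemma tOp_le {I X : Submodule R K}
    (h : ∀ J : Submodule R K, J ≠ ⊥ → J.FG → J ≤ I → vOp R K J ≤ X) : tOp R K I ≤ X := by
  rw [tOp]
  exact iSup₂_le fun J hJ => h J hJ.1 hJ.2.1 hJ.2.2

lemma le_tOp (I : Submodule R K) : I ≤ tOp R K I := by
  intro x hx
  by_cases hx0 : x = 0
  · simp [hx0]
  · have h1 : Submodule.span R {x} ≠ ⊥ := by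
      simpa [Submodule.span_singleton_eq_bot] using hx0
    have h3 : Submodule.span R {x} ≤ I := by
      rw [Submodule.span_le, Set.singleton_subset_iff]; exact hx
    exact vOp_le_tOp h1 (Submodule.fg_span_singleton x) h3
      (le_vOp _ (Submodule.mem_span_singleton_self x))

lemma tOp_mono {I J : Submodule R K} (h : I ≤ J) : tOp R K I ≤ tOp R K J :=
  tOp_le fun A h1 h2 h3 => vOp_le_tOp h1 h2 (h3.trans h)

lemma tOp_le_vOp (I : Submodule R K) : tOp R K I ≤ vOp R K I :=
  tOp_le fun _ _ _ h3 => vOp_mono h3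

lemma tOp_one : tOp R K (1 : Submodule R K) = 1 :=
  le_antisymm (by simpa [vOp_one] using tOp_le_vOp (1 : Submodule R K)) (le_tOp 1)

lemma tOp_bot : tOp R K (⊥ : Submodule R K) = ⊥ :=
  le_antisymm (tOp_le fun J h1 _ h3 => absurd (le_bot_iff.1 h3) h1) bot_le

lemma tOp_le_one {I : Submodule R K} (h : I ≤ 1) : tOp R K I ≤ 1 :=
  (tOp_mono h).trans tOp_one.le

lemma mem_tOp {x : K} {I : Submodule R K} (hx : x ∈ tOp R K I) (h0 : x ≠ 0) :
    ∃ J : Submodule R K, J ≠ ⊥ ∧ J.FG ∧ J ≤ I ∧ x ∈ vOp R K J := by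
  by_cases hI : I = ⊥
  · rw [hI, tOp_bot] at hx; exact absurd hx (by simpa using h0)
  · obtain ⟨y, hy, hy0⟩ := Submodule.exists_mem_ne_zero_of_ne_bot hI
    set S := {J : Submodule R K | J ≠ ⊥ ∧ J.FG ∧ J ≤ I}
    have hne : S.Nonempty := by
      refine ⟨Submodule.span R {y}, ?_, Submodule.fg_span_singleton y, ?_⟩
      · simpa [Submodule.span_singleton_eq_bot] using hy0
      · rw [Submodule.span_le, Set.singleton_subset_iff]; exact hy
    haveI : Nonempty S := hne.to_subtype
    have hdir : Directed (· ≤ ·) (fun J : S => vOp R K J.1) := by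
      rintro ⟨J1, hJ1⟩ ⟨J2, hJ2⟩
      refine ⟨⟨J1 ⊔ J2, ?_, hJ1.2.1.sup hJ2.2.1, sup_le hJ1.2.2 hJ2.2.2⟩, ?_, ?_⟩
      · intro hb
        exact hJ1.1 (le_bot_iff.1 (hb ▸ le_sup_left))
      · exact vOp_mono le_sup_left
      · exact vOp_mono le_sup_right
    rw [tOp, iSup_subtype'] at hx
    obtain ⟨⟨J, hJ⟩, hxJ⟩ := (Submodule.mem_iSup_of_directed _ hdir).1 hx
    exact ⟨J, hJ.1, hJ.2.1, hJ.2.2, hxJ⟩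

lemma fg_le_tOp {A' I : Submodule R K} (h : A' ≤ tOp R K I) (hfg : A'.FG) (hb : A' ≠ ⊥) :
    ∃ A : Submodule R K, A ≠ ⊥ ∧ A.FG ∧ A ≤ I ∧ A' ≤ vOp R K A := by
  have hI : I ≠ ⊥ := by
    intro hI
    rw [hI, tOp_bot, le_bot_iff] at h
    exact hb h
  obtain ⟨y, hy, hy0⟩ := Submodule.exists_mem_ne_zero_of_ne_bot hI
  have hyS : Submodule.span R {y} ≠ ⊥ ∧ (Submodule.span R {y}).FG ∧ Submodule.span R {y} ≤ I :=
    ⟨by simpa [Submodule.span_singleton_eq_bot] using hy0, Submodule.fg_span_singleton y,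
      by rw [Submodule.span_le, Set.singleton_subset_iff]; exact hy⟩
  obtain ⟨T, hT⟩ := hfg
  suffices hgen : ∀ T : Finset K, (T : Set K) ⊆ (tOp R K I : Set K) →
      ∃ A : Submodule R K, A ≠ ⊥ ∧ A.FG ∧ A ≤ I ∧ Submodule.span R (T : Set K) ≤ vOp R K A by
    obtain ⟨A, h1, h2, h3, h4⟩ := hgen T (by rw [← Submodule.span_le, hT]; exact h)
    exact ⟨A, h1, h2, h3, by rw [← hT]; exact h4⟩
  intro T
  classical
  induction T using Finset.induction_on with
  | empty => exact fun _ => ⟨Submodule.span R {y}, hyS.1, hyS.2.1, hyS.2.2, by simp⟩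
  | @insert t T ht IH =>
    intro hins
    rw [Finset.coe_insert] at hins ⊢
    obtain ⟨A1, h1, h2, h3, h4⟩ := IH fun z hz => hins (Set.subset_insert _ _ hz)
    by_cases ht0 : t = 0
    · refine ⟨A1, h1, h2, h3, ?_⟩
      rw [Submodule.span_insert, sup_le_iff]
      exact ⟨by simp [ht0], h4⟩
    · obtain ⟨Jt, j1, j2, j3, j4⟩ := mem_tOp (hins (Set.mem_insert t _)) ht0
      refine ⟨A1 ⊔ Jt, fun hbb => h1 (le_bot_iff.1 (hbb ▸ le_sup_left)), h2.sup j2,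
        sup_le h3 j3, ?_⟩
      rw [Submodule.span_insert, sup_le_iff]
      constructor
      · rw [Submodule.span_le, Set.singleton_subset_iff]
        exact vOp_mono le_sup_right j4
      · exact h4.trans (vOp_mono le_sup_left)

lemma tOp_tOp (I : Submodule R K) : tOp R K (tOp R K I) = tOp R K I := by
  refine le_antisymm (tOp_le fun J h1 h2 h3 => ?_) (le_tOp _)
  obtain ⟨A, a1, a2, a3, a4⟩ := fg_le_tOp h3 h2 h1
  have : vOp R K J ≤ vOp R K A := by
    have := vOp_mono a4
    rwa [vOp_vOp] at this
  exact this.trans (vOp_le_tOp a1 a2 a3)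

lemma tOp_smul {c : K} (hc : c ≠ 0) (I : Submodule R K) :
    tOp R K (c • I) = c • tOp R K I := by
  have key : ∀ (d : K), d ≠ 0 → ∀ X : Submodule R K, tOp R K (d • X) ≤ d • tOp R K X := by
    intro d hd X
    refine tOp_le fun J h1 h2 h3 => ?_
    have hJX : d⁻¹ • J ≤ X := by
      intro z hz
      obtain ⟨w, hw, rfl⟩ := mem_smulK.1 hz
      obtain ⟨v, hv, rfl⟩ := mem_smulK.1 (h3 hw)
      rwa [show d⁻¹ * (d * v) = v by field_simp]
    have : vOp R K J = d • vOp R K (d⁻¹ • J) := by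
      rw [← vOp_smul hd, smul_smul, mul_inv_cancel₀ hd, one_smul]
    rw [this]
    exact smulK_mono d (vOp_le_tOp (smulK_ne_bot (inv_ne_zero hd) h1) (smulK_fg h2) hJX)
  refine le_antisymm (key c hc I) ?_
  have := key c⁻¹ (inv_ne_zero hc) (c • I)
  rw [smul_smul, inv_mul_cancel₀ hc, one_smul] at this
  have := smulK_mono c this
  rwa [smul_smul, mul_inv_cancel₀ hc, one_smul] at this

lemma tOp_mul_right (A B : Submodule R K) : tOp R K (A * tOp R K B) = tOp R K (A * B) := by
  refine le_antisymm ?_ (tOp_mono (mul_le_mul_right (le_tOp B) A))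
  have step : A * tOp R K B ≤ tOp R K (A * B) := by
    rw [Submodule.mul_le]
    intro a ha b hb
    by_cases ha0 : a = 0
    · simp [ha0]
    by_cases hb0 : b = 0
    · simp [hb0]
    obtain ⟨J, j1, j2, j3, j4⟩ := mem_tOp hb hb0
    have hmem : a * b ∈ vOp R K (a • J) := by
      rw [vOp_smul ha0]
      exact mem_smulK.2 ⟨b, j4, rfl⟩
    refine vOp_le_tOp (smulK_ne_bot ha0 j1) (smulK_fg j2) ?_ hmem
    rw [← Submodule.span_singleton_mul]
    exact mul_le_mul' (by rwa [Submodule.span_le, Set.singleton_subset_iff]) j3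
  calc tOp R K (A * tOp R K B) ≤ tOp R K (tOp R K (A * B)) := tOp_mono step
    _ = tOp R K (A * B) := tOp_tOp _

lemma tOp_mul_left (A B : Submodule R K) : tOp R K (tOp R K A * B) = tOp R K (A * B) := by
  rw [mul_comm, tOp_mul_right, mul_comm]

-- locSub lemmas
lemma mem_locSub {S : Submonoid R} {I : Submodule R K} {x : K} :
    x ∈ locSub R S I ↔ ∃ s ∈ S, (s : R) • x ∈ I := Iff.rfl

lemma le_locSub (S : Submonoid R) (I : Submodule R K) : I ≤ locSub R S I :=
  fun x hx => ⟨1, S.one_mem, by simpa using hx⟩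

lemma locSub_mono (S : Submonoid R) {I J : Submodule R K} (h : I ≤ J) :
    locSub R S I ≤ locSub R S J := by
  rintro x ⟨s, hs, hsx⟩
  exact ⟨s, hs, h hsx⟩

lemma locSub_le (S : Submonoid R) {I J : Submodule R K} (h : I ≤ locSub R S J) :
    locSub R S I ≤ locSub R S J := by
  rintro x ⟨s, hs, hsx⟩
  obtain ⟨t, ht, h2⟩ := h hsx
  exact ⟨t * s, S.mul_mem ht hs, by rw [mul_smul]; exact h2⟩

lemma locSub_mul_le (S : Submonoid R) (A B : Submodule R K) :
    locSub R S A * locSub R S B ≤ locSub R S (A * B) := by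
  rw [Submodule.mul_le]
  rintro a ⟨s, hs, hsa⟩ b ⟨t, ht, htb⟩
  refine ⟨s * t, S.mul_mem hs ht, ?_⟩
  have : (s * t : R) • (a * b) = ((s : R) • a) * ((t : R) • b) := by
    rw [Algebra.smul_def, Algebra.smul_def, Algebra.smul_def, map_mul]
    ring
  rw [this]
  exact Submodule.mul_mem_mul hsa htb

lemma smul_ne_zero_of_nzd {s : R} (hs : s ≠ 0) : (algebraMap R (FractionRing R)) s ≠ 0 := by
  rw [Ne, IsFractionRing.to_map_eq_zero_iff]
  exact hs

lemma locSub_mul (S : Submonoid R) (h0 : (0 : R) ∉ S) (A B : Submodule R K) :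
    locSub R S (A * B) = locSub R S A * locSub R S B := by
  refine le_antisymm ?_ (locSub_mul_le S A B)
  rintro x ⟨s, hs, hsx⟩
  have hsne : (ι s) ≠ 0 := smul_ne_zero_of_nzd (fun h => h0 (h ▸ hs))
  have hsub : A * B ≤ Submodule.comap (LinearMap.mul R K (ι s)⁻¹)
      (locSub R S A * locSub R S B) := by
    rw [Submodule.mul_le]
    intro a ha b hb
    simp only [Submodule.mem_comap, LinearMap.mul_apply']
    rw [show (ι s)⁻¹ * (a * b) = ((ι s)⁻¹ * a) * b by ring]
    refine Submodule.mul_mem_mul ⟨s, hs, ?_⟩ (le_locSub S B hb)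
    rw [Algebra.smul_def, show ι s * ((ι s)⁻¹ * a) = (ι s * (ι s)⁻¹) * a by ring,
      mul_inv_cancel₀ hsne, one_mul]
    exact ha
  have := hsub hsx
  simp only [Submodule.mem_comap, LinearMap.mul_apply'] at this
  rwa [Algebra.smul_def, show (ι s)⁻¹ * (ι s * x) = (ι s * (ι s)⁻¹) * x by ring,
    mul_inv_cancel₀ hsne, one_mul] at this

lemma locSub_bot (S : Submonoid R) (h0 : (0 : R) ∉ S) : locSub R S (⊥ : Submodule R K) = ⊥ := by
  refine le_antisymm ?_ bot_le
  rintro x ⟨s, hs, hsx⟩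
  have hsne : (ι s) ≠ 0 := smul_ne_zero_of_nzd (fun h => h0 (h ▸ hs))
  rw [Submodule.mem_bot] at hsx ⊢
  rw [Algebra.smul_def] at hsx
  rcases mul_eq_zero.1 hsx with h | h
  · exact absurd h hsne
  · exact h

lemma zero_notMem_primeCompl (M : Ideal R) [hM : M.IsPrime] : (0 : R) ∉ M.primeCompl :=
  fun h => h (M.zero_mem)

lemma one_notMem_locSub_idealToFrac (M : Ideal R) [hM : M.IsPrime] :
    (1 : K) ∉ locSub R M.primeCompl (idealToFrac R M) := by
  rintro ⟨s, hs, hsx⟩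
  obtain ⟨m, hm, hms⟩ := hsx
  apply hs
  have : m = s := by
    apply IsFractionRing.injective R (FractionRing R)
    simpa [Algebra.smul_def] using hms
  rwa [← this]

lemma mem_idealToFrac {M : Ideal R} {x : K} :
    x ∈ idealToFrac R M ↔ ∃ m ∈ M, ι m = x := Submodule.mem_map

lemma idealToFrac_le_one (M : Ideal R) : idealToFrac R M ≤ 1 := by
  rintro x ⟨m, hm, rfl⟩
  exact Submodule.mem_one.2 ⟨m, rfl⟩

-- valuation pair lemma
lemma pair_lemma (M : Ideal R) [hP : M.IsPrime]
    (hV : @ValuationRing (Localization.AtPrime M) _ (IsLocalization.isDomain_of_local_atPrime hP))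
    (a b : K) :
    a ∈ locSub R M.primeCompl (Submodule.span R {b}) ∨
    b ∈ locSub R M.primeCompl (Submodule.span R {a}) := by
  obtain ⟨⟨p1, d1⟩, h1⟩ := IsLocalization.surj (nonZeroDivisors R) a
  obtain ⟨⟨p2, d2⟩, h2⟩ := IsLocalization.surj (nonZeroDivisors R) b
  letI := IsLocalization.isDomain_of_local_atPrime hP
  letI := hV
  set ψ := algebraMap R (Localization.AtPrime M)
  have hd : ι ((d1 : R) * (d2 : R)) ≠ 0 :=
    smul_ne_zero_of_nzd (mul_ne_zero (nonZeroDivisors.coe_ne_zero d1)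
      (nonZeroDivisors.coe_ne_zero d2))
  -- generic claim: if ψ x1 divides ψ x2 then b-with-x2 is locally in span of a-with-x1
  have main : ∀ (x y : K) (q1 q2 : R), x * ι ((d1:R)*(d2:R)) = ι q1 →
      y * ι ((d1:R)*(d2:R)) = ι q2 → (∃ c, ψ q1 * c = ψ q2) →
      y ∈ locSub R M.primeCompl (Submodule.span R {x}) := by
    intro x y q1 q2 hx hy ⟨c, hc⟩
    obtain ⟨⟨r, s⟩, rfl⟩ := IsLocalization.mk'_surjective M.primeCompl c
    have hspec : ψ q1 * (IsLocalization.mk' (Localization.AtPrime M) r s * ψ (s : R))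
        = ψ q2 * ψ (s : R) := by rw [← mul_assoc]; exact congrArg (· * ψ (s : R)) hc
    rw [IsLocalization.mk'_spec] at hspec
    have heq : ψ (q2 * (s : R)) = ψ (q1 * r) := by
      rw [map_mul, map_mul, ← hspec]
    obtain ⟨u, hu⟩ := (IsLocalization.eq_iff_exists M.primeCompl _).1 heq
    refine ⟨(u : R) * (s : R), M.primeCompl.mul_mem u.2 s.2, ?_⟩
    have key : (ι ((u : R) * (s : R)) * y) * ι ((d1:R)*(d2:R))
        = (ι ((u : R) * r) * x) * ι ((d1:R)*(d2:R)) := by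
      rw [show ι ((u:R)*(s:R)) * y * ι ((d1:R)*(d2:R)) = ι ((u:R)*(s:R)) * (y * ι ((d1:R)*(d2:R))) by ring,
        hy, show ι ((u:R)*r) * x * ι ((d1:R)*(d2:R)) = ι ((u:R)*r) * (x * ι ((d1:R)*(d2:R))) by ring,
        hx, ← map_mul, ← map_mul]
      congr 1
      calc (u:R) * (s:R) * q2 = (u:R) * (q2 * (s:R)) := by ring
        _ = (u:R) * (q1 * r) := hu
        _ = (u:R) * r * q1 := by ring
    have key2 : ι ((u : R) * (s : R)) * y = ι ((u : R) * r) * x :=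
      mul_right_cancel₀ hd key
    rw [Algebra.smul_def, key2, ← Algebra.smul_def]
    exact Submodule.smul_mem _ _ (Submodule.mem_span_singleton_self x)
  obtain ⟨c, hc | hc⟩ := ValuationRing.cond (ψ (p1 * (d2 : R))) (ψ (p2 * (d1 : R)))
  · right
    refine main a b (p1 * (d2 : R)) (p2 * (d1 : R)) ?_ ?_ ⟨c, hc⟩
    · rw [map_mul, map_mul, ← h1]; ring
    · rw [map_mul, map_mul, ← h2]; ring
  · left
    refine main b a (p2 * (d1 : R)) (p1 * (d2 : R)) ?_ ?_ ⟨c, hc⟩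
    · rw [map_mul, map_mul, ← h2]; ring
    · rw [map_mul, map_mul, ← h1]; ring

lemma finset_principal (M : Ideal R) [hP : M.IsPrime]
    (hV : @ValuationRing (Localization.AtPrime M) _ (IsLocalization.isDomain_of_local_atPrime hP))
    (T : Finset K) :
    ∃ x : K, (x = 0 ∨ x ∈ T) ∧ locSub R M.primeCompl (Submodule.span R (T : Set K))
      = locSub R M.primeCompl (Submodule.span R {x}) := by
  classical
  induction T using Finset.induction_on with
  | empty => exact ⟨0, Or.inl rfl, by simp⟩
  | @insert t T ht IH =>
    obtain ⟨x, hxm, hx⟩ := IH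
    rcases pair_lemma M hV t x with h | h
    · refine ⟨x, by rcases hxm with h0 | hm; exact Or.inl h0; exact Or.inr (Finset.mem_insert_of_mem hm), le_antisymm ?_ ?_⟩
      · refine locSub_le _ ?_
        rw [Finset.coe_insert, Submodule.span_insert, sup_le_iff]
        constructor
        · rw [Submodule.span_le, Set.singleton_subset_iff]; exact h
        · exact (le_locSub _ _).trans hx.le
      · rw [← hx]
        refine locSub_mono _ (Submodule.span_mono ?_)
        rw [Finset.coe_insert]
        exact Set.subset_insert _ _
    · refine ⟨t, Or.inr (Finset.mem_insert_self t T), le_antisymm ?_ ?_⟩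
      · refine locSub_le _ ?_
        rw [Finset.coe_insert, Submodule.span_insert, sup_le_iff]
        constructor
        · exact le_locSub _ _
        · refine le_trans (le_locSub M.primeCompl _) ?_
          rw [hx]
          refine locSub_le _ ?_
          rw [Submodule.span_le, Set.singleton_subset_iff]
          exact h
      · refine locSub_mono _ ?_
        rw [Submodule.span_le, Set.singleton_subset_iff, Finset.coe_insert]
        exact Submodule.subset_span (Set.mem_insert t _)

-- uniform multiplier lemma
lemma finset_uniform (S : Submonoid R) (N : Submodule R K) (T : Finset K)
    (h : ∀ a ∈ T, ∃ s ∈ S, (s : R) • a ∈ N) :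
    ∃ s ∈ S, ∀ a ∈ T, (s : R) • a ∈ N := by
  classical
  induction T using Finset.induction_on with
  | empty => exact ⟨1, S.one_mem, by simp⟩
  | @insert t T ht IH =>
    obtain ⟨s, hs, hst⟩ := IH fun a ha => h a (Finset.mem_insert_of_mem ha)
    obtain ⟨u, hu, hut⟩ := h t (Finset.mem_insert_self t T)
    refine ⟨u * s, S.mul_mem hu hs, ?_⟩
    intro a ha
    rcases Finset.mem_insert.1 ha with rfl | ha
    · rw [mul_comm, mul_smul]; exact N.smul_mem s hut
    · rw [mul_smul]; exact N.smul_mem u (hst a ha)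

-- Zorn: existence of t-maximal ideals
lemma chain_finset_ub {c : Set (Submodule R K)} (hchain : IsChain (· ≤ ·) c)
    {y : Submodule R K} (hy : y ∈ c) (T : Finset K) (hT : ∀ t ∈ T, ∃ b ∈ c, t ∈ b) :
    ∃ b ∈ c, ∀ t ∈ T, t ∈ b := by
  classical
  induction T using Finset.induction_on with
  | empty => exact ⟨y, hy, by simp⟩
  | @insert t T ht IH =>
    obtain ⟨b1, hb1, hb1t⟩ := IH fun a ha => hT a (Finset.mem_insert_of_mem ha)
    obtain ⟨b2, hb2, hb2t⟩ := hT t (Finset.mem_insert_self t T)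
    rcases hchain.total hb1 hb2 with h | h
    · exact ⟨b2, hb2, fun a ha => by
        rcases Finset.mem_insert.1 ha with rfl | ha
        · exact hb2t
        · exact h (hb1t a ha)⟩
    · exact ⟨b1, hb1, fun a ha => by
        rcases Finset.mem_insert.1 ha with rfl | ha
        · exact h hb2t
        · exact hb1t a ha⟩

lemma exists_tmax (A : Submodule R K) (hA1 : A ≤ 1) (hAt : tOp R K A = A)
    (hAb : A ≠ ⊥) (hA1' : (1 : K) ∉ A) :
    ∃ M : Ideal R, IsTMaximal R M ∧ A ≤ idealToFrac R M := by
  set P : Set (Submodule R K) :=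
    {B | A ≤ B ∧ B ≤ 1 ∧ tOp R K B = B ∧ (1 : K) ∉ B} with hP
  have hzorn : ∃ m, A ≤ m ∧ Maximal (· ∈ P) m := by
    refine zorn_le_nonempty₀ P ?_ A ⟨le_rfl, hA1, hAt, hA1'⟩
    intro c hcP hchain y hyc
    refine ⟨sSup c, ?_, fun z hz => le_sSup hz⟩
    have hdir := hchain.directedOn
    have hne : c.Nonempty := ⟨y, hyc⟩
    refine ⟨le_trans (hcP hyc).1 (le_sSup hyc), sSup_le fun b hb => (hcP hb).2.1, ?_, ?_⟩
    · refine le_antisymm (tOp_le fun J h1 h2 h3 => ?_) (le_tOp _)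
      obtain ⟨T, hT⟩ := id h2
      have hTmem : ∀ t ∈ T, ∃ b ∈ c, t ∈ b := by
        intro t htT
        have : t ∈ sSup c := h3 (hT ▸ Submodule.subset_span htT)
        exact (Submodule.mem_sSup_of_directed hne hdir).1 this
      obtain ⟨b, hbc, hbT⟩ := chain_finset_ub hchain hyc T hTmem
      have hJb : J ≤ b := by
        rw [← hT, Submodule.span_le]
        intro t htT
        exact hbT t htT
      calc vOp R K J ≤ tOp R K b := vOp_le_tOp h1 h2 hJb
        _ = b := (hcP hbc).2.2.1
        _ ≤ sSup c := le_sSup hbc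
    · intro hmem
      obtain ⟨b, hbc, hb1⟩ := (Submodule.mem_sSup_of_directed hne hdir).1 hmem
      exact (hcP hbc).2.2.2 hb1
  obtain ⟨m, hAm, hmax⟩ := hzorn
  obtain ⟨⟨hm1, hm2, hm3, hm4⟩, hmaxle⟩ := hmax
  set Mi : Ideal R := Submodule.comap (Algebra.linearMap R (FractionRing R)) m with hMi
  have hmap : idealToFrac R Mi = m := by
    rw [idealToFrac, Submodule.map_comap_eq, ← Submodule.one_eq_range, inf_eq_right.2 hm2]
  have hinj : Function.Injective (Algebra.linearMap R (FractionRing R)) :=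
    IsFractionRing.injective R (FractionRing R)
  have hne_top : Mi ≠ ⊤ := by
    intro h
    apply hm4
    rw [← hmap, mem_idealToFrac]
    exact ⟨1, by rw [h]; trivial, map_one _⟩
  have hprime : Mi.IsPrime := by
    constructor
    · exact hne_top
    · intro a b hab
      by_cases ha : a ∈ Mi
      · exact Or.inl ha
      right
      by_cases hb0 : b = 0
      · rw [hb0]; exact Mi.zero_mem
      have hb0' : (ι b) ≠ 0 := smul_ne_zero_of_nzd hb0
      set m' := tOp R K (m ⊔ Submodule.span R {ι a}) with hm'
      by_cases h1m : (1 : K) ∈ m'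
      · -- b • everything lands in m
        have hsmul : (ι b) • (m ⊔ Submodule.span R {ι a}) ≤ m := by
          rw [Submodule.smul_sup']
          refine sup_le ?_ ?_
          · intro z hz
            obtain ⟨w, hw, rfl⟩ := mem_smulK.1 hz
            rw [← Algebra.smul_def]
            exact m.smul_mem b hw
          · intro z hz
            obtain ⟨w, hw, rfl⟩ := mem_smulK.1 hz
            obtain ⟨r, rfl⟩ := Submodule.mem_span_singleton.1 hw
            rw [Algebra.smul_def, show ι b * (ι r * ι a) = r • (ι (a * b)) by
              rw [Algebra.smul_def, map_mul]; ring]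
            exact m.smul_mem r hab
        have : ι b ∈ (ι b) • m' := mem_smulK.2 ⟨1, h1m, mul_one _⟩
        rw [hm', ← tOp_smul hb0'] at this
        have hle : tOp R K ((ι b) • (m ⊔ Submodule.span R {ι a})) ≤ m := by
          calc tOp R K ((ι b) • (m ⊔ Submodule.span R {ι a})) ≤ tOp R K m := tOp_mono hsmul
            _ = m := hm3
        exact hle this
      · -- m' ∈ P, contradiction with maximality
        exfalso
        have hm'P : m' ∈ P := by
          refine ⟨hAm.trans (le_sup_left.trans (le_tOp _)), ?_, tOp_tOp _, h1m⟩
          refine tOp_le_one (sup_le hm2 ?_)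
          rw [Submodule.span_le, Set.singleton_subset_iff]
          exact Submodule.mem_one.2 ⟨a, rfl⟩
        have : m' ≤ m := hmaxle hm'P (le_sup_left.trans (le_tOp _))
        apply ha
        have : ι a ∈ m := this ((le_sup_right.trans (le_tOp _) : Submodule.span R {ι a} ≤ m')
          (Submodule.mem_span_singleton_self (ι a)))
        exact this
  have hne_bot : Mi ≠ ⊥ := by
    intro h
    rw [h] at hmap
    apply hAb
    rw [← le_bot_iff]
    calc A ≤ m := hAm
      _ = idealToFrac R ⊥ := hmap.symm
      _ = ⊥ := by rw [idealToFrac, Submodule.map_bot]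
  have hisT : IsTIdeal R Mi := by rw [IsTIdeal, hmap]; exact hm3
  refine ⟨Mi, ⟨hne_bot, hne_top, hprime, hisT, ?_⟩, by rw [hmap]; exact hAm⟩
  intro J hJtop hJt hMJ
  have hJP : idealToFrac R J ∈ P := by
    refine ⟨?_, idealToFrac_le_one J, hJt, ?_⟩
    · exact hAm.trans (le_trans hmap.ge (Submodule.map_mono hMJ))
    · intro h1J
      obtain ⟨j, hj, hj1⟩ := mem_idealToFrac.1 h1J
      have : j = 1 := hinj (by simpa using hj1)
      exact hJtop (Ideal.eq_top_iff_one J |>.2 (this ▸ hj))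
  have hJm : idealToFrac R J = m :=
    le_antisymm (hmaxle hJP (le_trans hmap.ge (Submodule.map_mono hMJ)))
      (le_trans hmap.ge (Submodule.map_mono hMJ))
  -- J = Mi by injectivity
  have : Submodule.comap (Algebra.linearMap R (FractionRing R)) (idealToFrac R J) = J := by
    rw [idealToFrac, Submodule.comap_map_eq, LinearMap.ker_eq_bot.2 hinj, sup_bot_eq]
  rw [← this, hJm]

-- PVMD lemmas
lemma mul_one_div_le_one (J : Submodule R K) : J * (1 / J) ≤ 1 := by
  rw [Submodule.mul_le]
  intro a ha b hb
  rw [mul_comm]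
  exact Submodule.mem_div_iff_forall_mul_mem.1 hb a ha

lemma one_div_mul_vOp_le_one (J : Submodule R K) : (1 / J) * vOp R K J ≤ 1 := by
  rw [Submodule.mul_le]
  intro a ha b hb
  rw [mul_comm]
  exact Submodule.mem_div_iff_forall_mul_mem.1 hb a ha

lemma t_invertible_of_fg (hR : IsPVMD R) {J : Submodule R K} (hfg : J.FG) (hb : J ≠ ⊥) :
    tOp R K (J * (1 / J)) = 1 := by
  obtain ⟨T, hT⟩ := id hfg
  obtain ⟨d, hd⟩ := IsLocalization.exist_integer_multiples_of_finset (nonZeroDivisors R) T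
  have hdJ : ι (d : R) ∈ 1 / J := by
    rw [Submodule.mem_div_iff_forall_mul_mem]
    suffices h : J ≤ Submodule.comap (LinearMap.mul R K (ι (d : R))) 1 by
      intro y hy
      exact h hy
    rw [← hT, Submodule.span_le]
    intro t htT
    obtain ⟨r, hr⟩ := hd t htT
    simp only [SetLike.mem_coe, Submodule.mem_comap, LinearMap.mul_apply']
    rw [← Algebra.smul_def]
    exact Submodule.mem_one.2 ⟨r, hr⟩
  have hdne : ι (d : R) ≠ 0 := smul_ne_zero_of_nzd (nonZeroDivisors.coe_ne_zero d)
  obtain ⟨j0, hj0, hj0ne⟩ := Submodule.exists_mem_ne_zero_of_ne_bot hb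
  have hJJb : J * (1 / J) ≠ ⊥ := by
    intro h
    rw [Submodule.eq_bot_iff] at h
    exact mul_ne_zero hj0ne hdne (h _ (Submodule.mul_mem_mul hj0 hdJ))
  by_contra hne
  have h1n : (1 : K) ∉ tOp R K (J * (1 / J)) := by
    intro h1
    exact hne (le_antisymm (tOp_le_one (mul_one_div_le_one J)) (Submodule.one_le.2 h1))
  have hAb : tOp R K (J * (1 / J)) ≠ ⊥ := by
    intro h
    exact hJJb (le_bot_iff.1 (h ▸ le_tOp _))
  obtain ⟨M, hM, hMle⟩ := exists_tmax _ (tOp_le_one (mul_one_div_le_one J)) (tOp_tOp _) hAb h1n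
  have hJJM : J * (1 / J) ≤ idealToFrac R M := (le_tOp _).trans hMle
  haveI := hM.isPrime
  obtain ⟨x, hxm, hx⟩ := finset_principal M (hR M hM) T
  rw [hT] at hx
  have hx0 : x ≠ 0 := by
    rintro rfl
    apply hb
    rw [← le_bot_iff]
    calc J ≤ locSub R M.primeCompl J := le_locSub _ _
      _ = locSub R M.primeCompl (Submodule.span R {(0:K)}) := hx
      _ = ⊥ := by
          rw [Submodule.span_zero_singleton]
          exact locSub_bot _ (zero_notMem_primeCompl M)
  have hxT : x ∈ T := by
    rcases hxm with rfl | hmem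
    · exact absurd rfl hx0
    · exact hmem
  have hxJ : x ∈ J := by rw [← hT]; exact Submodule.subset_span hxT
  obtain ⟨s, hs, hst⟩ := finset_uniform M.primeCompl (Submodule.span R {x}) T
    (fun a ha => by
      have : a ∈ locSub R M.primeCompl J :=
        le_locSub _ _ (by rw [← hT]; exact Submodule.subset_span ha)
      rw [hx] at this
      exact this)
  have hq : ι s * x⁻¹ ∈ 1 / J := by
    rw [Submodule.mem_div_iff_forall_mul_mem]
    suffices h : J ≤ Submodule.comap (LinearMap.mul R K (ι s * x⁻¹)) 1 by
      intro y hy; exact h hy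
    rw [← hT, Submodule.span_le]
    intro t htT
    obtain ⟨r, hr⟩ := Submodule.mem_span_singleton.1 (hst t htT)
    simp only [SetLike.mem_coe, Submodule.mem_comap, LinearMap.mul_apply']
    have hfin : ι s * x⁻¹ * t = ι r := by
      calc ι s * x⁻¹ * t = ((s : R) • t) * x⁻¹ := by rw [Algebra.smul_def]; ring
        _ = ((r : R) • x) * x⁻¹ := by rw [hr]
        _ = ι r * (x * x⁻¹) := by rw [Algebra.smul_def]; ring
        _ = ι r := by rw [mul_inv_cancel₀ hx0, mul_one]
    rw [hfin]
    exact Submodule.mem_one.2 ⟨r, rfl⟩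
  have hmem : ι s ∈ idealToFrac R M := by
    have hx2 : x * (ι s * x⁻¹) ∈ J * (1 / J) := Submodule.mul_mem_mul hxJ hq
    rw [show x * (ι s * x⁻¹) = ι s * (x * x⁻¹) by ring, mul_inv_cancel₀ hx0, mul_one] at hx2
    exact hJJM hx2
  apply hs
  obtain ⟨mm, hmm, hmm2⟩ := mem_idealToFrac.1 hmem
  rwa [show mm = s from IsFractionRing.injective R (FractionRing R) hmm2] at hmm

lemma fg_le_mul {G X Y : Submodule R K} (hfg : G.FG) (h : G ≤ X * Y) :
    ∃ A B : Submodule R K, A.FG ∧ B.FG ∧ A ≤ X ∧ B ≤ Y ∧ G ≤ A * B := by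
  classical
  obtain ⟨T, hT⟩ := hfg
  suffices hgen : ∀ T : Finset K, (T : Set K) ⊆ (X * Y : Submodule R K) →
      ∃ A B : Submodule R K, A.FG ∧ B.FG ∧ A ≤ X ∧ B ≤ Y ∧
        Submodule.span R (T : Set K) ≤ A * B by
    obtain ⟨A, B, h1, h2, h3, h4, h5⟩ := hgen T (fun t htT => h (hT ▸ Submodule.subset_span htT))
    exact ⟨A, B, h1, h2, h3, h4, by rw [← hT]; exact h5⟩
  intro T
  induction T using Finset.induction_on with
  | empty => exact fun _ => ⟨⊥, ⊥, Submodule.fg_bot, Submodule.fg_bot, bot_le, bot_le, by simp⟩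
  | @insert t T ht IH =>
    intro hins
    rw [Finset.coe_insert] at hins ⊢
    obtain ⟨A1, B1, a1, b1, a2, b2, hle⟩ := IH fun z hz => hins (Set.subset_insert _ _ hz)
    obtain ⟨T1, T2, hT1, hT2, htmem⟩ :=
      Submodule.mem_span_mul_finite_of_mem_mul (hins (Set.mem_insert t _))
    refine ⟨A1 ⊔ Submodule.span R (T1 : Set K), B1 ⊔ Submodule.span R (T2 : Set K),
      a1.sup (Submodule.fg_span T1.finite_toSet), b1.sup (Submodule.fg_span T2.finite_toSet),
      sup_le a2 (Submodule.span_le.2 hT1), sup_le b2 (Submodule.span_le.2 hT2), ?_⟩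
    rw [Submodule.span_insert, sup_le_iff]
    constructor
    · rw [Submodule.span_le, Set.singleton_subset_iff]
      have hmem2 : t ∈ Submodule.span R (T1 : Set K) * Submodule.span R (T2 : Set K) := by
        rwa [Submodule.span_mul_span]
      exact (mul_le_mul' le_sup_right le_sup_right : Submodule.span R (T1 : Set K) * Submodule.span R (T2 : Set K) ≤ (A1 ⊔ Submodule.span R (T1 : Set K)) * (B1 ⊔ Submodule.span R (T2 : Set K))) hmem2
    · exact hle.trans (mul_le_mul' le_sup_left le_sup_left)

lemma exists_out {Z : Submodule R K} (hZ : Z ≤ 1) {M : Ideal R} (hM : IsTMaximal R M)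
    {G : Submodule R K} (hGb : G ≠ ⊥) (hGfg : G.FG) (hGle : G ≤ Z)
    (h1 : (1 : K) ∈ vOp R K G) :
    ∃ r : R, r ∉ M ∧ ι r ∈ G := by
  by_contra hcon
  push_neg at hcon
  have hGM : G ≤ idealToFrac R M := by
    intro g hg
    obtain ⟨r, rfl⟩ := Submodule.mem_one.1 (hZ (hGle hg))
    by_cases hr : r ∈ M
    · exact mem_idealToFrac.2 ⟨r, hr, rfl⟩
    · exact absurd hg (by simpa using hcon r (by exact hr))
  have hone : (1 : K) ∈ idealToFrac R M := by
    have h2 := vOp_le_tOp hGb hGfg hGM h1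
    rwa [hM.isT] at h2
  obtain ⟨mm, hmm, hmm2⟩ := mem_idealToFrac.1 hone
  have : mm = 1 := IsFractionRing.injective R (FractionRing R) (by simpa using hmm2)
  exact hM.ne_top (Ideal.eq_top_iff_one M |>.2 (this ▸ hmm))

lemma vOp_le_locSub (hR : IsPVMD R) {J : Submodule R K} (hfg : J.FG) (hb : J ≠ ⊥)
    {M : Ideal R} [hPr : M.IsPrime] (hM : IsTMaximal R M) :
    vOp R K J ≤ locSub R M.primeCompl J := by
  have hinv := t_invertible_of_fg hR hfg hb
  have h1 : (1 : K) ∈ tOp R K (J * (1 / J)) := by rw [hinv]; exact Submodule.one_le.1 le_rfl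
  obtain ⟨G, g1, g2, g3, g4⟩ := mem_tOp h1 one_ne_zero
  obtain ⟨A, B, a1, b1, a2, b2, g5⟩ := fg_le_mul g2 g3
  have hABb : A * B ≠ ⊥ := fun h => g1 (le_bot_iff.1 (h ▸ g5))
  have hABle : A * B ≤ 1 := (mul_le_mul' a2 b2).trans (mul_one_div_le_one J)
  have h1v : (1 : K) ∈ vOp R K (A * B) := vOp_mono g5 g4
  obtain ⟨r, hrM, hrG⟩ := exists_out hABle hM hABb (a1.mul b1) le_rfl h1v
  intro z hz
  refine ⟨r, hrM, ?_⟩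
  have hmem : ι r * z ∈ (A * B) * vOp R K J := Submodule.mul_mem_mul hrG hz
  have hle : (A * B) * vOp R K J ≤ J := by
    calc (A * B) * vOp R K J ≤ (J * (1 / J)) * vOp R K J :=
          mul_le_mul' (mul_le_mul' a2 b2) le_rfl
      _ = J * ((1 / J) * vOp R K J) := mul_assoc _ _ _
      _ ≤ J * 1 := mul_le_mul' le_rfl (one_div_mul_vOp_le_one J)
      _ = J := mul_one J
  rw [Algebra.smul_def]
  exact hle hmem

lemma tOp_le_locSub (hR : IsPVMD R) (X : Submodule R K) {M : Ideal R} [hPr : M.IsPrime]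
    (hM : IsTMaximal R M) :
    tOp R K X ≤ locSub R M.primeCompl X :=
  tOp_le fun J h1 h2 h3 => (vOp_le_locSub hR h2 h1 hM).trans (locSub_mono _ h3)

lemma locSub_tOp (hR : IsPVMD R) (X : Submodule R K) {M : Ideal R} [hPr : M.IsPrime]
    (hM : IsTMaximal R M) :
    locSub R M.primeCompl (tOp R K X) = locSub R M.primeCompl X :=
  le_antisymm (locSub_le _ (tOp_le_locSub hR X hM)) (locSub_mono _ (le_tOp X))

lemma mem_one_of_forall_loc {z : K}
    (h : ∀ M : Ideal R, ∀ hM : IsTMaximal R M,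
      z ∈ locSub R (@Ideal.primeCompl R _ M hM.isPrime) 1) :
    z ∈ (1 : Submodule R K) := by
  by_cases hz0 : z = 0
  · rw [hz0]; exact Submodule.zero_mem 1
  set Hz := (1 : Submodule R K) ⊓ (z⁻¹ • (1 : Submodule R K)) with hHz
  have hmemHz : ∀ w : K, w ∈ Hz ↔ (w ∈ (1 : Submodule R K) ∧ z * w ∈ (1 : Submodule R K)) := by
    intro w
    rw [hHz, Submodule.mem_inf, mem_smulK]
    constructor
    · rintro ⟨h1, y, hy, rfl⟩
      refine ⟨h1, ?_⟩
      rwa [show z * (z⁻¹ * y) = y by field_simp]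
    · rintro ⟨h1, h2⟩
      exact ⟨h1, z * w, h2, by field_simp⟩
  have hdiv : vOp R K Hz ≤ Hz := by
    refine le_inf ?_ ?_
    · have := vOp_mono (inf_le_left : Hz ≤ (1 : Submodule R K))
      rwa [vOp_one] at this
    · have := vOp_mono (inf_le_right : Hz ≤ z⁻¹ • (1 : Submodule R K))
      rwa [vOp_smul (inv_ne_zero hz0), vOp_one] at this
  have ht : tOp R K Hz = Hz := le_antisymm ((tOp_le_vOp _).trans hdiv) (le_tOp _)
  obtain ⟨⟨p, d⟩, hd⟩ := IsLocalization.surj (nonZeroDivisors R) z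
  have hdHz : ι (d : R) ∈ Hz := by
    rw [hmemHz]
    exact ⟨Submodule.mem_one.2 ⟨d, rfl⟩, by rw [hd]; exact Submodule.mem_one.2 ⟨p, rfl⟩⟩
  have hHb : Hz ≠ ⊥ := by
    intro hbot
    rw [Submodule.eq_bot_iff] at hbot
    exact smul_ne_zero_of_nzd (nonZeroDivisors.coe_ne_zero d) (hbot _ hdHz)
  by_cases h1H : (1 : K) ∈ Hz
  · have := (hmemHz 1).1 h1H
    simpa using this.2
  · obtain ⟨N, hN, hNle⟩ := exists_tmax Hz inf_le_left ht hHb h1H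
    haveI := hN.isPrime
    obtain ⟨s, hs, hsz⟩ := h N hN
    exfalso
    apply hs
    have hsHz : ι s ∈ Hz := by
      rw [hmemHz]
      refine ⟨Submodule.mem_one.2 ⟨s, rfl⟩, ?_⟩
      rwa [mul_comm, ← Algebra.smul_def]
    obtain ⟨mm, hmm, hmm2⟩ := mem_idealToFrac.1 (hNle hsHz)
    rwa [show mm = s from IsFractionRing.injective R (FractionRing R) hmm2] at hmm

-- additional lemmas for the main theorem
lemma primeCompl_ne_zero {M : Ideal R} [M.IsPrime] {s : R} (hs : s ∈ M.primeCompl) : s ≠ 0 :=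
  fun h => hs (h ▸ M.zero_mem)

lemma locSub_span_eq {M : Ideal R} [M.IsPrime] {x : K} (hx0 : x ≠ 0) :
    locSub R M.primeCompl (Submodule.span R {x})
      = x • locSub R M.primeCompl (1 : Submodule R K) := by
  refine le_antisymm ?_ ?_
  · rintro z ⟨s, hs, hsz⟩
    obtain ⟨r, hr⟩ := Submodule.mem_span_singleton.1 hsz
    have hsne : ι s ≠ 0 := smul_ne_zero_of_nzd (primeCompl_ne_zero hs)
    refine mem_smulK.2 ⟨ι r * (ι s)⁻¹, ⟨s, hs, ?_⟩, ?_⟩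
    · rw [Algebra.smul_def, show ι s * (ι r * (ι s)⁻¹) = ι r * (ι s * (ι s)⁻¹) by ring,
        mul_inv_cancel₀ hsne, mul_one]
      exact Submodule.mem_one.2 ⟨r, rfl⟩
    · have h2 : ι s * z = ι r * x := by
        rw [← Algebra.smul_def]
        rw [← hr, Algebra.smul_def]
      field_simp
      rw [h2]
      ring
  · rintro z hz
    obtain ⟨y, hy, rfl⟩ := mem_smulK.1 hz
    obtain ⟨t, ht, hty⟩ := hy
    obtain ⟨b, hb⟩ := Submodule.mem_one.1 hty
    refine ⟨t, ht, ?_⟩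
    rw [Algebra.smul_def, show ι t * (x * y) = x * (ι t * y) by ring, ← Algebra.smul_def, ← hb,
      show x * ι b = (b : R) • x from by rw [Algebra.smul_def]; ring]
    exact Submodule.smul_mem _ b (Submodule.mem_span_singleton_self x)

end KM
open KM

set_option maxHeartbeats 3000000 in
/-- **Lemma 3.4.** Let `R` be a PVMD which is Clifford `t`-regular and `I` a nonzero
fractional ideal of `R`. Then `I` is `t`-invertible iff `I` is `t`-locally principal
(`I R_M` is a principal fractional ideal of `R_M` for every `t`-maximal ideal `M`). -/
theorem tInvertible_iff_tLocallyPrincipal (R : Type*) [CommRing R] [IsDomain R]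
    (hR : IsPVMD R) (hC : IsCliffordTRegular R)
    (I : Submodule R (FractionRing R)) (hI : IsFracIdeal R I) :
    IsTInvertible R I ↔
      ∀ M : Ideal R, ∀ hM : IsTMaximal R M, ∃ x : FractionRing R,
        locSub R (@Ideal.primeCompl R _ M hM.isPrime) I =
          locSub R (@Ideal.primeCompl R _ M hM.isPrime)
            (Submodule.span R {x}) := by
  obtain ⟨hIb, hIfrac⟩ := hI
  constructor
  · -- t-invertible → t-locally principal
    intro hinv M hM
    haveI := hM.isPrime
    have hinv' : tOp R (FractionRing R) (I * ((1 : Submodule R (FractionRing R)) / I)) = 1 := hinv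
    have h1 : (1 : FractionRing R) ∈ tOp R (FractionRing R)
        (I * ((1 : Submodule R (FractionRing R)) / I)) := by
      rw [hinv']; exact Submodule.one_le.1 le_rfl
    obtain ⟨G, g1, g2, g3, g4⟩ := mem_tOp h1 one_ne_zero
    obtain ⟨A, B, a1, b1, a2, b2, g5⟩ := fg_le_mul g2 g3
    have hABb : A * B ≠ ⊥ := fun h => g1 (le_bot_iff.1 (h ▸ g5))
    have hABle : A * B ≤ 1 := (mul_le_mul' a2 b2).trans (mul_one_div_le_one I)
    have h1v : (1 : FractionRing R) ∈ vOp R (FractionRing R) (A * B) := vOp_mono g5 g4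
    obtain ⟨r, hrM, hrG⟩ := exists_out hABle hM hABb (a1.mul b1) le_rfl h1v
    have hIA : locSub R M.primeCompl I = locSub R M.primeCompl A := by
      refine le_antisymm ?_ (locSub_mono _ a2)
      refine locSub_le _ ?_
      intro y hy
      refine ⟨r, hrM, ?_⟩
      have hmem : algebraMap R (FractionRing R) r * y ∈ (A * B) * I :=
        Submodule.mul_mem_mul hrG hy
      have hle : (A * B) * I ≤ A := by
        calc (A * B) * I = A * (B * I) := mul_assoc _ _ _
          _ ≤ A * 1 := mul_le_mul' le_rfl (by
              calc B * I ≤ ((1 : Submodule R (FractionRing R)) / I) * I :=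
                    mul_le_mul' b2 le_rfl
                _ = I * ((1 : Submodule R (FractionRing R)) / I) := mul_comm _ _
                _ ≤ 1 := mul_one_div_le_one I)
          _ = A := mul_one A
      rw [Algebra.smul_def]
      exact hle hmem
    obtain ⟨TA, hTA⟩ := id a1
    obtain ⟨x, hxm, hx⟩ := finset_principal M (hR M hM) TA
    exact ⟨x, by rw [hIA, ← hTA]; exact hx⟩
  · -- t-locally principal → t-invertible
    intro hloc
    show tOp R (FractionRing R) (I * ((1 : Submodule R (FractionRing R)) / I)) = 1
    by_contra hne
    obtain ⟨d, hdmem, hd⟩ := hIfrac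
    have hdne0 : d ≠ 0 := nonZeroDivisors.ne_zero hdmem
    have hdne : algebraMap R (FractionRing R) d ≠ 0 := smul_ne_zero_of_nzd hdne0
    have hdI1 : algebraMap R (FractionRing R) d ∈ (1 : Submodule R (FractionRing R)) / I := by
      rw [Submodule.mem_div_iff_forall_mul_mem]
      intro y hy
      obtain ⟨r, hr⟩ := hd y hy
      rw [← Algebra.smul_def]
      exact Submodule.mem_one.2 ⟨r, hr⟩
    obtain ⟨y0, hy0, hy0ne⟩ := Submodule.exists_mem_ne_zero_of_ne_bot hIb
    have hJJb : I * ((1 : Submodule R (FractionRing R)) / I) ≠ ⊥ := by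
      intro h
      rw [Submodule.eq_bot_iff] at h
      exact mul_ne_zero hy0ne hdne (h _ (Submodule.mul_mem_mul hy0 hdI1))
    have h1n : (1 : FractionRing R) ∉ tOp R (FractionRing R)
        (I * ((1 : Submodule R (FractionRing R)) / I)) := by
      intro h1
      exact hne (le_antisymm (tOp_le_one (mul_one_div_le_one I)) (Submodule.one_le.2 h1))
    have hAb : tOp R (FractionRing R) (I * ((1 : Submodule R (FractionRing R)) / I)) ≠ ⊥ :=
      fun h => hJJb (le_bot_iff.1 (h ▸ le_tOp _))
    obtain ⟨M, hM, hMle⟩ := exists_tmax _ (tOp_le_one (mul_one_div_le_one I)) (tOp_tOp _) hAb h1n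
    haveI := hM.isPrime
    obtain ⟨x, hxI⟩ := hloc M hM
    have hx0 : x ≠ 0 := by
      rintro rfl
      apply hIb
      rw [← le_bot_iff]
      calc I ≤ locSub R M.primeCompl I := le_locSub _ _
        _ = locSub R M.primeCompl (Submodule.span R {(0 : FractionRing R)}) := hxI
        _ = ⊥ := by
            rw [Submodule.span_zero_singleton]
            exact locSub_bot _ (zero_notMem_primeCompl M)
    -- I_t is a fractional t-ideal
    set It := tOp R (FractionRing R) I with hIt
    have hIle : I ≤ It := le_tOp I
    have hItb : It ≠ ⊥ := fun h => hIb (le_bot_iff.1 (h ▸ hIle))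
    have hsmI : (algebraMap R (FractionRing R) d) • I ≤ 1 := by
      intro z hz
      obtain ⟨w, hw, rfl⟩ := mem_smulK.1 hz
      rw [← Algebra.smul_def]
      obtain ⟨r, hr⟩ := hd w hw
      exact Submodule.mem_one.2 ⟨r, hr⟩
    have hsmIt : (algebraMap R (FractionRing R) d) • It ≤ 1 := by
      rw [hIt, ← tOp_smul hdne]
      exact tOp_le_one hsmI
    have hItfrac : IsTFracIdeal R It := by
      refine ⟨⟨hItb, d, hdmem, fun b hb => ?_⟩, tOp_tOp I⟩
      have : algebraMap R (FractionRing R) d * b ∈ (1 : Submodule R (FractionRing R)) :=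
        hsmIt (mem_smulK.2 ⟨b, hb, rfl⟩)
      obtain ⟨r, hr⟩ := Submodule.mem_one.1 this
      exact ⟨r, by rw [Algebra.smul_def]; exact hr⟩
    obtain ⟨J, hJ, c, hc0, hCl⟩ := hC It hItfrac
    set F := c⁻¹ • tOp R (FractionRing R) (It * J) with hF
    have hcF : tOp R (FractionRing R) (It * J) = c • F := by
      rw [hF, smul_smul, mul_inv_cancel₀ hc0, one_smul]
    have hFIt : tOp R (FractionRing R) (F * It) = It := by
      calc tOp R (FractionRing R) (F * It)
          = tOp R (FractionRing R) (c⁻¹ • (tOp R (FractionRing R) (It * J) * It)) := by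
            rw [hF, smul_mulK]
        _ = c⁻¹ • tOp R (FractionRing R) (tOp R (FractionRing R) (It * J) * It) :=
            tOp_smul (inv_ne_zero hc0) _
        _ = c⁻¹ • tOp R (FractionRing R) ((It * J) * It) := by rw [tOp_mul_left]
        _ = c⁻¹ • tOp R (FractionRing R) (It * It * J) := by
            rw [show (It * J) * It = It * It * J by rw [mul_assoc, mul_comm J, ← mul_assoc]]
        _ = c⁻¹ • (c • It) := by rw [hCl]
        _ = It := by rw [smul_smul, inv_mul_cancel₀ hc0, one_smul]
    have hFIt2 : F * It ≤ It := (le_tOp _).trans hFIt.le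
    -- F is contained in R (i.e. in 1)
    have hF1 : F ≤ 1 := by
      intro z hz
      refine mem_one_of_forall_loc (fun N hN => ?_)
      haveI := hN.isPrime
      obtain ⟨xN, hxN⟩ := hloc N hN
      have hxNmem : xN ∈ locSub R N.primeCompl I := by
        rw [hxN]
        exact le_locSub _ _ (Submodule.mem_span_singleton_self xN)
      have hxN0 : xN ≠ 0 := by
        rintro rfl
        apply hIb
        rw [← le_bot_iff]
        calc I ≤ locSub R N.primeCompl I := le_locSub _ _
          _ = locSub R N.primeCompl (Submodule.span R {(0 : FractionRing R)}) := hxN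
          _ = ⊥ := by
              rw [Submodule.span_zero_singleton]
              exact locSub_bot _ (zero_notMem_primeCompl N)
      have hzx : z * xN ∈ locSub R N.primeCompl It := by
        obtain ⟨s, hs, hsx⟩ := hxNmem
        refine ⟨s, hs, ?_⟩
        have hmem : z * ((s : R) • xN) ∈ F * It :=
          Submodule.mul_mem_mul hz (hIle hsx)
        have heq : (s : R) • (z * xN) = z * ((s : R) • xN) := by
          rw [Algebra.smul_def, Algebra.smul_def]; ring
        rw [heq]
        exact hFIt2 hmem
      have hzx2 : z * xN ∈ locSub R N.primeCompl (Submodule.span R {xN}) := by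
        rw [← hxN, ← locSub_tOp hR I hN]
        exact hzx
      obtain ⟨s, hs, hsz⟩ := hzx2
      obtain ⟨r, hr⟩ := Submodule.mem_span_singleton.1 hsz
      refine ⟨s, hs, ?_⟩
      have h2 : (algebraMap R (FractionRing R) s * z) * xN = algebraMap R (FractionRing R) r * xN := by
        calc (algebraMap R (FractionRing R) s * z) * xN
            = (s : R) • (z * xN) := by rw [Algebra.smul_def]; ring
          _ = (r : R) • xN := hr.symm
          _ = algebraMap R (FractionRing R) r * xN := Algebra.smul_def _ _
      have h3 : algebraMap R (FractionRing R) s * z = algebraMap R (FractionRing R) r :=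
        mul_right_cancel₀ hxN0 h2
      rw [Algebra.smul_def, h3]
      exact Submodule.mem_one.2 ⟨r, rfl⟩
    -- localization at M : get s ∉ M with ι s ∈ F
    have h0M : (0 : R) ∉ M.primeCompl := zero_notMem_primeCompl M
    have e1 : locSub R M.primeCompl I = locSub R M.primeCompl F * locSub R M.primeCompl It := by
      calc locSub R M.primeCompl I = locSub R M.primeCompl It := (locSub_tOp hR I hM).symm
        _ = locSub R M.primeCompl (F * It) := by
            conv_lhs => rw [← hFIt]
            rw [locSub_tOp hR (F * It) hM]
        _ = locSub R M.primeCompl F * locSub R M.primeCompl It := locSub_mul _ h0M F It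
    have e2 : locSub R M.primeCompl It = locSub R M.primeCompl I := locSub_tOp hR I hM
    have e3 : locSub R M.primeCompl I
        = locSub R M.primeCompl F * locSub R M.primeCompl I := by rw [e2] at e1; exact e1
    have e4 : x • locSub R M.primeCompl (1 : Submodule R (FractionRing R))
        = x • (locSub R M.primeCompl (1 : Submodule R (FractionRing R))
            * locSub R M.primeCompl F) := by
      calc x • locSub R M.primeCompl (1 : Submodule R (FractionRing R))
          = locSub R M.primeCompl (Submodule.span R {x}) := (locSub_span_eq hx0).symm
        _ = locSub R M.primeCompl I := hxI.symm
        _ = locSub R M.primeCompl F * locSub R M.primeCompl I := e3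
        _ = locSub R M.primeCompl F
            * (x • locSub R M.primeCompl (1 : Submodule R (FractionRing R))) := by
            rw [hxI, locSub_span_eq hx0]
        _ = (x • locSub R M.primeCompl (1 : Submodule R (FractionRing R)))
            * locSub R M.primeCompl F := mul_comm _ _
        _ = x • (locSub R M.primeCompl (1 : Submodule R (FractionRing R))
            * locSub R M.primeCompl F) := smul_mulK _ _ _
    have e5 : locSub R M.primeCompl (1 : Submodule R (FractionRing R))
        = locSub R M.primeCompl (1 : Submodule R (FractionRing R)) * locSub R M.primeCompl F :=
      smulK_cancel hx0 e4
    have hnotle : ¬ locSub R M.primeCompl F ≤ locSub R M.primeCompl (idealToFrac R M) := by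
      intro hcon
      have h1V : (1 : FractionRing R) ∈ locSub R M.primeCompl (1 : Submodule R (FractionRing R)) :=
        le_locSub _ _ (Submodule.one_le.1 le_rfl)
      have : (1 : FractionRing R) ∈ locSub R M.primeCompl (idealToFrac R M) := by
        have hh : (1 : FractionRing R) ∈ locSub R M.primeCompl (1 : Submodule R (FractionRing R))
            * locSub R M.primeCompl F := by rw [← e5]; exact h1V
        have hle : locSub R M.primeCompl (1 : Submodule R (FractionRing R))
            * locSub R M.primeCompl F ≤ locSub R M.primeCompl (idealToFrac R M) := by
          calc locSub R M.primeCompl (1 : Submodule R (FractionRing R)) * locSub R M.primeCompl F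
              ≤ locSub R M.primeCompl (1 : Submodule R (FractionRing R))
                * locSub R M.primeCompl (idealToFrac R M) :=
                mul_le_mul' le_rfl hcon
            _ ≤ locSub R M.primeCompl (1 * idealToFrac R M) := locSub_mul_le _ _ _
            _ = locSub R M.primeCompl (idealToFrac R M) := by rw [one_mul]
        exact hle hh
      exact one_notMem_locSub_idealToFrac M this
    obtain ⟨f, hfF, hfn⟩ := SetLike.not_le_iff_exists.1 hnotle
    have hfV : f ∈ locSub R M.primeCompl (1 : Submodule R (FractionRing R)) := locSub_mono _ hF1 hfF
    obtain ⟨t, ht, htf⟩ := hfV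
    obtain ⟨b, hb⟩ := Submodule.mem_one.1 htf
    have hbM : b ∉ M := by
      intro hbM
      exact hfn ⟨t, ht, by rw [← hb]; exact mem_idealToFrac.2 ⟨b, hbM, rfl⟩⟩
    obtain ⟨sig, hsig, hsigf⟩ := hfF
    have hsF : algebraMap R (FractionRing R) (sig * b) ∈ F := by
      have hmem : (t : R) • ((sig : R) • f) ∈ F := Submodule.smul_mem F t hsigf
      have heq : (t : R) • ((sig : R) • f) = algebraMap R (FractionRing R) (sig * b) := by
        rw [smul_comm, ← hb, Algebra.smul_def, ← map_mul]
      rwa [heq] at hmem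
    have hsM : sig * b ∈ M.primeCompl := M.primeCompl.mul_mem hsig hbM
    set s := sig * b with hs
    -- extraction of a finitely generated witness
    have hcs : c * algebraMap R (FractionRing R) s ∈ tOp R (FractionRing R) (It * J) := by
      obtain ⟨w, hw, hweq⟩ := mem_smulK.1 hsF
      have : w = c * algebraMap R (FractionRing R) s := by
        rw [← hweq, show c * (c⁻¹ * w) = (c * c⁻¹) * w by ring, mul_inv_cancel₀ hc0, one_mul]
      rwa [← this]
    have hsne : algebraMap R (FractionRing R) s ≠ 0 :=
      smul_ne_zero_of_nzd (primeCompl_ne_zero hsM)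
    have hcs0 : c * algebraMap R (FractionRing R) s ≠ 0 := mul_ne_zero hc0 hsne
    obtain ⟨G, g1, g2, g3, g4⟩ := mem_tOp hcs hcs0
    obtain ⟨A', B', a1', b1', a2', b2', g5⟩ := fg_le_mul g2 g3
    have hA'b : A' ≠ ⊥ := by
      rintro rfl
      rw [Submodule.bot_mul, le_bot_iff] at g5
      exact g1 g5
    have hB'b : B' ≠ ⊥ := by
      rintro rfl
      rw [Submodule.mul_bot, le_bot_iff] at g5
      exact g1 g5
    obtain ⟨A, ha1, ha2, ha3, ha4⟩ := fg_le_tOp a2' a1' hA'b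
    have hvle : vOp R (FractionRing R) G ≤ vOp R (FractionRing R) (A * B') := by
      have step : A' * B' ≤ vOp R (FractionRing R) (A * B') :=
        (mul_le_mul' ha4 (le_vOp B')).trans (vOp_mul_vOp_le A B')
      have := vOp_mono (g5.trans step)
      rwa [vOp_vOp] at this
    -- c⁻¹ • B' ⊆ 1 / I
    have hJI : c⁻¹ • B' ≤ (1 : Submodule R (FractionRing R)) / I := by
      intro z hz
      obtain ⟨b', hb', rfl⟩ := mem_smulK.1 hz
      rw [Submodule.mem_div_iff_forall_mul_mem]
      intro y hy
      have h1 : y * b' ∈ It * J := Submodule.mul_mem_mul (hIle hy) (b2' hb')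
      have h2 : c⁻¹ * b' * y ∈ F := by
        have h3 : y * b' ∈ c • F := by rw [← hcF]; exact le_tOp _ h1
        obtain ⟨w, hw, hweq⟩ := mem_smulK.1 h3
        have : c⁻¹ * b' * y = w := by
          rw [show c⁻¹ * b' * y = c⁻¹ * (y * b') by ring, ← hweq,
            show c⁻¹ * (c * w) = (c⁻¹ * c) * w by ring, inv_mul_cancel₀ hc0, one_mul]
        rwa [this]
      exact hF1 h2
    set G0 := A * (c⁻¹ • B') with hG0
    have hG0le : G0 ≤ I * ((1 : Submodule R (FractionRing R)) / I) :=
      mul_le_mul' ha3 hJI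
    have hG0fg : G0.FG := ha2.mul (smulK_fg b1')
    have hG0b : G0 ≠ ⊥ := by
      obtain ⟨a0, ha0, ha0ne⟩ := Submodule.exists_mem_ne_zero_of_ne_bot ha1
      obtain ⟨b0, hb0, hb0ne⟩ := Submodule.exists_mem_ne_zero_of_ne_bot hB'b
      intro h
      rw [Submodule.eq_bot_iff] at h
      have hmem : a0 * (c⁻¹ * b0) ∈ G0 :=
        Submodule.mul_mem_mul ha0 (mem_smulK.2 ⟨b0, hb0, rfl⟩)
      exact mul_ne_zero ha0ne (mul_ne_zero (inv_ne_zero hc0) hb0ne) (h _ hmem)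
    have hvG0 : vOp R (FractionRing R) G0 = c⁻¹ • vOp R (FractionRing R) (A * B') := by
      rw [hG0, show A * (c⁻¹ • B') = c⁻¹ • (A * B') by
        rw [mul_comm A, smul_mulK, mul_comm], vOp_smul (inv_ne_zero hc0)]
    have hsin : algebraMap R (FractionRing R) s ∈ vOp R (FractionRing R) G0 := by
      rw [hvG0]
      refine mem_smulK.2 ⟨c * algebraMap R (FractionRing R) s, hvle g4, ?_⟩
      rw [show c⁻¹ * (c * algebraMap R (FractionRing R) s)
        = (c⁻¹ * c) * algebraMap R (FractionRing R) s by ring, inv_mul_cancel₀ hc0, one_mul]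
    have hfinal : vOp R (FractionRing R) G0 ≤ idealToFrac R M :=
      (vOp_le_tOp hG0b hG0fg hG0le).trans hMle
    obtain ⟨mm, hmm, hmm2⟩ := mem_idealToFrac.1 (hfinal hsin)
    apply hsM
    rwa [show mm = s from IsFractionRing.injective R (FractionRing R) hmm2] at hmm
end

section
/- Let R be a PVMD which is Clifford t-regular and let P ⊊ Q be two t-prime ideals of R. Then there exists a finitely generated ideal I of R such that P ⊊ I_t ⊆ Q. -/
open Pointwise

variable (R : Type*) [CommRing R]

/-! ### Auxiliary lemmas -/

namespace TAux

section VT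

variable {R : Type*} [CommRing R] {K : Type*} [CommRing K] [Algebra R K]

theorem mem_div {x : K} {I J : Submodule R K} : x ∈ I / J ↔ ∀ y ∈ J, x * y ∈ I :=
  Submodule.mem_div_iff_forall_mul_mem

theorem div_le_div_left {X Y : Submodule R K} (h : X ≤ Y) (Z : Submodule R K) :
    Z / Y ≤ Z / X := fun z hz => mem_div.2 fun y hy => mem_div.1 hz y (h hy)

theorem le_vOp (X : Submodule R K) : X ≤ vOp R K X := fun x hx =>
  mem_div.2 fun y hy => by rw [mul_comm]; exact mem_div.1 hy x hx

theorem vOp_mono {X Y : Submodule R K} (h : X ≤ Y) : vOp R K X ≤ vOp R K Y :=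
  div_le_div_left (div_le_div_left h 1) 1

theorem one_div_one : (1 : Submodule R K) / 1 = 1 := by
  apply le_antisymm
  · intro x hx
    simpa using mem_div.1 hx 1 (Submodule.one_le.1 le_rfl)
  · intro x hx
    refine mem_div.2 fun y hy => ?_
    have h := Submodule.mul_mem_mul hx hy
    rwa [one_mul (1 : Submodule R K)] at h

theorem vOp_le_one {X : Submodule R K} (h : X ≤ 1) : vOp R K X ≤ 1 := by
  have h1 : (1 : Submodule R K) ≤ 1 / X := fun x hx => mem_div.2 fun y hy => by
    have h2 := Submodule.mul_mem_mul hx (h hy)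
    rwa [one_mul (1 : Submodule R K)] at h2
  calc vOp R K X ≤ 1 / 1 := div_le_div_left h1 1
  _ = 1 := one_div_one

theorem div_div_div (X : Submodule R K) : 1 / (1 / (1 / X)) = 1 / X := by
  apply le_antisymm
  · exact div_le_div_left (le_vOp X) 1
  · exact le_vOp (1 / X)

theorem vOp_idem (X : Submodule R K) : vOp R K (vOp R K X) = vOp R K X := by
  unfold vOp
  rw [div_div_div]

theorem vOp_one : vOp R K (1 : Submodule R K) = 1 := by
  unfold vOp; rw [one_div_one, one_div_one]

/-- membership form of `1 ∈ vOp F`. -/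
theorem div_le_one_of_one_mem_vOp {F : Submodule R K} (h : (1 : K) ∈ vOp R K F) :
    1 / F ≤ 1 := fun w hw => by simpa using mem_div.1 h w hw

theorem one_mem_vOp_of_div_le_one {F : Submodule R K} (h : 1 / F ≤ (1 : Submodule R K)) :
    (1 : K) ∈ vOp R K F :=
  mem_div.2 fun y hy => by simpa using h hy

theorem tOp_le {X Y : Submodule R K}
    (h : ∀ J : Submodule R K, J ≠ ⊥ → J.FG → J ≤ X → vOp R K J ≤ Y) :
    tOp R K X ≤ Y := by
  refine iSup₂_le fun J hJ => h J hJ.1 hJ.2.1 hJ.2.2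

theorem vOp_le_tOp {X J : Submodule R K} (h1 : J ≠ ⊥) (h2 : J.FG) (h3 : J ≤ X) :
    vOp R K J ≤ tOp R K X :=
  le_biSup _ ⟨h1, h2, h3⟩

theorem le_tOp (X : Submodule R K) : X ≤ tOp R K X := by
  intro x hx
  rcases eq_or_ne x 0 with rfl | hx0
  · exact zero_mem _
  · refine vOp_le_tOp (X := X) (J := Submodule.span R {x}) ?_ (Submodule.fg_span_singleton x)
      (Submodule.span_le.2 (by simpa using hx)) ?_
    · simpa [Submodule.span_singleton_eq_bot] using hx0
    · exact le_vOp _ (Submodule.mem_span_singleton_self x)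

theorem tOp_mono {X Y : Submodule R K} (h : X ≤ Y) : tOp R K X ≤ tOp R K Y :=
  tOp_le fun J h1 h2 h3 => vOp_le_tOp h1 h2 (h3.trans h)

theorem tOp_le_one {X : Submodule R K} (h : X ≤ 1) : tOp R K X ≤ 1 :=
  tOp_le fun _ _ _ h3 => vOp_le_one (h3.trans h)

theorem tOp_one : tOp R K (1 : Submodule R K) = 1 :=
  le_antisymm (tOp_le_one le_rfl) (le_tOp 1)

theorem tOp_bot : tOp R K (⊥ : Submodule R K) = ⊥ := by
  refine le_antisymm (tOp_le fun J h1 _ h3 => absurd (le_bot_iff.1 h3) h1) bot_le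

theorem mem_tOp {X : Submodule R K} (hX : X ≠ ⊥) {z : K} :
    z ∈ tOp R K X ↔ ∃ J : Submodule R K, J ≠ ⊥ ∧ J.FG ∧ J ≤ X ∧ z ∈ vOp R K J := by
  constructor
  · intro hz
    obtain ⟨x0, hx0X, hx00⟩ := Submodule.exists_mem_ne_zero_of_ne_bot hX
    have hne : Nonempty {J : Submodule R K // J ≠ ⊥ ∧ J.FG ∧ J ≤ X} := by
      refine ⟨⟨Submodule.span R {x0}, ?_, Submodule.fg_span_singleton x0,
        Submodule.span_le.2 (by simpa using hx0X)⟩⟩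
      simpa [Submodule.span_singleton_eq_bot] using hx00
    have hdir : Directed (· ≤ ·)
        (fun J : {J : Submodule R K // J ≠ ⊥ ∧ J.FG ∧ J ≤ X} => vOp R K J.1) := by
      rintro ⟨J1, h1⟩ ⟨J2, h2⟩
      refine ⟨⟨J1 ⊔ J2, ?_, h1.2.1.sup h2.2.1, sup_le h1.2.2 h2.2.2⟩,
        vOp_mono le_sup_left, vOp_mono le_sup_right⟩
      simp only [ne_eq, sup_eq_bot_iff, not_and]
      intro h; exact absurd h h1.1
    have : tOp R K X = ⨆ J : {J : Submodule R K // J ≠ ⊥ ∧ J.FG ∧ J ≤ X}, vOp R K J.1 := by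
      rw [tOp, iSup_subtype]
      rfl
    rw [this] at hz
    obtain ⟨⟨J, hJ⟩, hzJ⟩ := (Submodule.mem_iSup_of_directed _ hdir).1 hz
    exact ⟨J, hJ.1, hJ.2.1, hJ.2.2, hzJ⟩
  · rintro ⟨J, h1, h2, h3, hz⟩
    exact vOp_le_tOp h1 h2 h3 hz

end VT

end TAux
namespace TAux

section VT2

variable {R : Type*} [CommRing R] {K : Type*} [CommRing K] [Algebra R K]

theorem tOp_fg {X : Submodule R K} (h1 : X ≠ ⊥) (h2 : X.FG) : tOp R K X = vOp R K X :=
  le_antisymm (tOp_le fun _ _ _ h3 => vOp_mono h3) (vOp_le_tOp h1 h2 le_rfl)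

theorem tOp_idem (X : Submodule R K) : tOp R K (tOp R K X) = tOp R K X := by
  classical
  rcases eq_or_ne X ⊥ with rfl | hX
  · rw [tOp_bot, tOp_bot]
  refine le_antisymm (tOp_le fun J hJb hJfg hJle => ?_) (le_tOp _)
  obtain ⟨x0, hx0X, hx00⟩ := Submodule.exists_mem_ne_zero_of_ne_bot hX
  obtain ⟨T, hT⟩ := hJfg
  choose! f hf1 hf2 hf3 hf4 using fun t (ht : t ∈ tOp R K X) => (mem_tOp hX).1 ht
  set J' : Submodule R K := (T.sup f) ⊔ Submodule.span R {x0} with hJ'def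
  have hmemT : ∀ t ∈ T, t ∈ tOp R K X := fun t ht => hJle (hT ▸ Submodule.subset_span ht)
  have hJ'fg : J'.FG := by
    refine Submodule.FG.sup ?_ (Submodule.fg_span_singleton x0)
    exact Finset.sup_induction Submodule.fg_bot (fun a ha b hb => ha.sup hb)
      (fun t ht => hf2 t (hmemT t ht))
  have hJ'le : J' ≤ X := by
    refine sup_le (Finset.sup_le fun t ht => hf3 t (hmemT t ht))
      (Submodule.span_le.2 (by simpa using hx0X))
  have hJ'b : J' ≠ ⊥ := by
    refine (Submodule.ne_bot_iff _).2 ⟨x0, ?_, hx00⟩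
    exact le_sup_right (α := Submodule R K) (Submodule.mem_span_singleton_self x0)
  have hJv : J ≤ vOp R K J' := by
    rw [← hT]
    refine Submodule.span_le.2 fun t ht => ?_
    have : vOp R K (f t) ≤ vOp R K J' :=
      vOp_mono ((Finset.le_sup ht).trans le_sup_left)
    exact this (hf4 t (hmemT t ht))
  have := vOp_mono hJv
  rw [vOp_idem] at this
  exact this.trans (vOp_le_tOp hJ'b hJ'fg hJ'le)

theorem mul_ne_bot [NoZeroDivisors K] {X Y : Submodule R K} (hX : X ≠ ⊥) (hY : Y ≠ ⊥) :
    X * Y ≠ ⊥ := by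
  obtain ⟨x, hx, hx0⟩ := Submodule.exists_mem_ne_zero_of_ne_bot hX
  obtain ⟨y, hy, hy0⟩ := Submodule.exists_mem_ne_zero_of_ne_bot hY
  exact (Submodule.ne_bot_iff _).2 ⟨x * y, Submodule.mul_mem_mul hx hy, mul_ne_zero hx0 hy0⟩

theorem one_mem_vOp_mul {J1 J2 : Submodule R K} (h1 : (1 : K) ∈ vOp R K J1)
    (h2 : (1 : K) ∈ vOp R K J2) : (1 : K) ∈ vOp R K (J1 * J2) := by
  refine mem_div.2 fun y hy => ?_
  have hyJ1 : y ∈ 1 / J1 := by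
    refine mem_div.2 fun x hx => ?_
    have hyx : y * x ∈ 1 / J2 := mem_div.2 fun z hz => by
      have := mem_div.1 hy (x * z) (Submodule.mul_mem_mul hx hz)
      rwa [← mul_assoc] at this
    simpa using mem_div.1 h2 _ hyx
  exact mem_div.1 h1 y hyJ1

theorem one_mem_iff {X : Submodule R K} : (1 : K) ∈ X ↔ 1 ≤ X := Submodule.one_le.symm

theorem tOp_mul_eq_one [NoZeroDivisors K] {A B : Submodule R K} (hA1 : A ≤ 1) (hB1 : B ≤ 1)
    (hAb : A ≠ ⊥) (hBb : B ≠ ⊥) (hA : tOp R K A = 1) (hB : tOp R K B = 1) :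
    tOp R K (A * B) = 1 := by
  have h1A : (1 : K) ∈ tOp R K A := by rw [hA]; exact Submodule.one_le.1 le_rfl
  have h1B : (1 : K) ∈ tOp R K B := by rw [hB]; exact Submodule.one_le.1 le_rfl
  obtain ⟨J1, hb1, hfg1, hle1, hv1⟩ := (mem_tOp hAb).1 h1A
  obtain ⟨J2, hb2, hfg2, hle2, hv2⟩ := (mem_tOp hBb).1 h1B
  have hmem : (1 : K) ∈ tOp R K (A * B) :=
    vOp_le_tOp (mul_ne_bot hb1 hb2) (hfg1.mul hfg2) (mul_le_mul' hle1 hle2)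
      (one_mem_vOp_mul hv1 hv2)
  refine le_antisymm (tOp_le_one ?_) (Submodule.one_le.2 hmem)
  have := mul_le_mul' hA1 hB1
  rwa [one_mul] at this

theorem exists_fg_left {X Y : Submodule R K} {z : K} (hz : z ∈ X * Y) :
    ∃ G : Submodule R K, G.FG ∧ G ≤ X ∧ z ∈ G * Y := by
  refine Submodule.mul_induction_on hz ?_ ?_
  · intro m hm n hn
    exact ⟨Submodule.span R {m}, Submodule.fg_span_singleton m,
      Submodule.span_le.2 (by simpa using hm),
      Submodule.mul_mem_mul (Submodule.mem_span_singleton_self m) hn⟩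
  · rintro x y ⟨G1, hfg1, hle1, hx⟩ ⟨G2, hfg2, hle2, hy⟩
    exact ⟨G1 ⊔ G2, hfg1.sup hfg2, sup_le hle1 hle2,
      add_mem (mul_le_mul_left (le_sup_left (a := G1) (b := G2)) Y hx)
        (mul_le_mul_left (le_sup_right (a := G1) (b := G2)) Y hy)⟩

theorem smul_mul (c : K) (X Y : Submodule R K) : (c • X) * Y = c • (X * Y) := by
  rw [← Submodule.span_singleton_mul, ← Submodule.span_singleton_mul, mul_assoc]

theorem mul_smul_right (c : K) (X Y : Submodule R K) : X * (c • Y) = c • (X * Y) := by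
  rw [mul_comm X, smul_mul, mul_comm X]

theorem mem_smul_iff {c : K} {X : Submodule R K} {z : K} :
    z ∈ c • X ↔ ∃ x ∈ X, c * x = z := by
  constructor
  · intro hz
    obtain ⟨x, hx, rfl⟩ := Set.mem_smul_set.1 hz
    exact ⟨x, hx, rfl⟩
  · rintro ⟨x, hx, rfl⟩
    exact Submodule.smul_mem_pointwise_smul x c X hx

theorem smul_ne_bot [NoZeroDivisors K] {c : K} (hc : c ≠ 0) {X : Submodule R K} (hX : X ≠ ⊥) :
    c • X ≠ ⊥ := by
  obtain ⟨x, hx, hx0⟩ := Submodule.exists_mem_ne_zero_of_ne_bot hX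
  exact (Submodule.ne_bot_iff _).2 ⟨c * x, mem_smul_iff.2 ⟨x, hx, rfl⟩, mul_ne_zero hc hx0⟩

end VT2

end TAux
namespace TAux

section Frac

variable {R : Type*} [CommRing R] [IsDomain R]

theorem algInj : Function.Injective (algebraMap R (FractionRing R)) :=
  IsFractionRing.injective R (FractionRing R)

theorem mem_idealToFrac {I : Ideal R} {x : FractionRing R} :
    x ∈ idealToFrac R I ↔ ∃ r ∈ I, algebraMap R (FractionRing R) r = x := by
  simp [idealToFrac, Submodule.mem_map, Algebra.linearMap_apply]

theorem alg_mem_idealToFrac {I : Ideal R} {r : R} (h : r ∈ I) :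
    algebraMap R (FractionRing R) r ∈ idealToFrac R I :=
  mem_idealToFrac.2 ⟨r, h, rfl⟩

theorem alg_mem_idealToFrac_iff {I : Ideal R} {r : R} :
    algebraMap R (FractionRing R) r ∈ idealToFrac R I ↔ r ∈ I := by
  refine ⟨fun h => ?_, alg_mem_idealToFrac⟩
  obtain ⟨r', hr', he⟩ := mem_idealToFrac.1 h
  rwa [← algInj he]

theorem idealToFrac_le_one (I : Ideal R) : idealToFrac R I ≤ 1 := by
  intro x hx
  obtain ⟨r, _, rfl⟩ := mem_idealToFrac.1 hx
  rw [Submodule.one_eq_range]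
  exact ⟨r, rfl⟩

theorem mem_one_iff {x : FractionRing R} :
    x ∈ (1 : Submodule R (FractionRing R)) ↔ ∃ r : R, algebraMap R (FractionRing R) r = x := by
  rw [Submodule.one_eq_range]; rfl

theorem idealToFrac_ne_bot {I : Ideal R} (hI : I ≠ ⊥) : idealToFrac R I ≠ ⊥ := by
  obtain ⟨r, hr, hr0⟩ := Submodule.exists_mem_ne_zero_of_ne_bot hI
  refine (Submodule.ne_bot_iff _).2 ⟨algebraMap R (FractionRing R) r, alg_mem_idealToFrac hr, ?_⟩
  simpa using fun h => hr0 (algInj (by simpa using h))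

theorem idealToFrac_mono {I J : Ideal R} (h : I ≤ J) : idealToFrac R I ≤ idealToFrac R J :=
  Submodule.map_mono h

theorem idealToFrac_le_iff {I J : Ideal R} : idealToFrac R I ≤ idealToFrac R J ↔ I ≤ J := by
  refine ⟨fun h r hr => ?_, idealToFrac_mono⟩
  exact alg_mem_idealToFrac_iff.1 (h (alg_mem_idealToFrac hr))

theorem idealToFrac_top : idealToFrac R (⊤ : Ideal R) = 1 := by
  rw [idealToFrac, Submodule.map_top, Submodule.one_eq_range]

/-- The ideal of `R` corresponding to an integral submodule of the fraction field. -/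
noncomputable def fracToIdeal (X : Submodule R (FractionRing R)) : Ideal R :=
  Submodule.comap (Algebra.linearMap R (FractionRing R)) X

theorem idealToFrac_fracToIdeal {X : Submodule R (FractionRing R)} (hX : X ≤ 1) :
    idealToFrac R (fracToIdeal X) = X := by
  rw [idealToFrac, fracToIdeal, Submodule.map_comap_eq, ← Submodule.one_eq_range,
    inf_eq_right.2 hX]

theorem mem_fracToIdeal {X : Submodule R (FractionRing R)} {r : R} :
    r ∈ fracToIdeal X ↔ algebraMap R (FractionRing R) r ∈ X := Iff.rfl

theorem isTIdeal_fracToIdeal {X : Submodule R (FractionRing R)} (hX : X ≤ 1)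
    (ht : tOp R (FractionRing R) X = X) : IsTIdeal R (fracToIdeal X) := by
  unfold IsTIdeal
  rw [idealToFrac_fracToIdeal hX, ht]

/-- The localization of `R` at (the complement of) a prime `M`, as a submodule of the
fraction field. -/
noncomputable def locR (M : Ideal R) (hM : M.IsPrime) : Submodule R (FractionRing R) :=
  locSub R (@Ideal.primeCompl R _ M hM) (1 : Submodule R (FractionRing R))

theorem mem_locR {M : Ideal R} {hM : M.IsPrime} {z : FractionRing R} :
    z ∈ locR M hM ↔ ∃ s : R, s ∉ M ∧ s • z ∈ (1 : Submodule R (FractionRing R)) := Iff.rfl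

theorem one_le_locR {M : Ideal R} (hM : M.IsPrime) : 1 ≤ locR M hM := by
  intro z hz
  exact mem_locR.2 ⟨1, (Ideal.ne_top_iff_one M).1 hM.ne_top, by simpa using hz⟩

theorem one_mem_locR {M : Ideal R} (hM : M.IsPrime) : (1 : FractionRing R) ∈ locR M hM :=
  one_le_locR hM (Submodule.one_le.1 le_rfl)

theorem smul_eq_alg_mul (s : R) (z : FractionRing R) :
    s • z = algebraMap R (FractionRing R) s * z := Algebra.smul_def s z

theorem locR_mul_mem {M : Ideal R} {hM : M.IsPrime} {u v : FractionRing R}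
    (hu : u ∈ locR M hM) (hv : v ∈ locR M hM) : u * v ∈ locR M hM := by
  obtain ⟨s, hs, hsu⟩ := mem_locR.1 hu
  obtain ⟨t, ht, htv⟩ := mem_locR.1 hv
  refine mem_locR.2 ⟨s * t, fun h => (hM.mem_or_mem h).elim hs ht, ?_⟩
  have h1 := Submodule.mul_mem_mul hsu htv
  rw [one_mul] at h1
  have : (s * t) • (u * v) = (s • u) * (t • v) := by
    simp only [smul_eq_alg_mul, map_mul]; ring
  rwa [this]

theorem locR_mul_locR {M : Ideal R} (hM : M.IsPrime) : locR M hM * locR M hM = locR M hM := by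
  refine le_antisymm (Submodule.mul_le.2 fun u hu v hv => locR_mul_mem hu hv) ?_
  intro z hz
  have := Submodule.mul_mem_mul hz (one_mem_locR hM)
  rwa [mul_one] at this

theorem le_mul_locR {M : Ideal R} (hM : M.IsPrime) (X : Submodule R (FractionRing R)) :
    X ≤ X * locR M hM := by
  intro z hz
  have := Submodule.mul_mem_mul hz (one_mem_locR hM)
  rwa [mul_one] at this

theorem mul_locR_mul_locR {M : Ideal R} (hM : M.IsPrime) (X : Submodule R (FractionRing R)) :
    X * locR M hM * locR M hM = X * locR M hM := by
  rw [mul_assoc, locR_mul_locR]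

theorem alg_ne_zero {s : R} (hs : s ≠ 0) : algebraMap R (FractionRing R) s ≠ 0 := fun h =>
  hs (algInj (by simpa using h))

theorem mem_mul_locR_of_smul_mem {M : Ideal R} {hM : M.IsPrime} {s : R} (hs : s ∉ M)
    {z : FractionRing R} {X : Submodule R (FractionRing R)} (h : s • z ∈ X) :
    z ∈ X * locR M hM := by
  have hs0 : s ≠ 0 := fun h0 => hs (h0 ▸ M.zero_mem)
  set σ := algebraMap R (FractionRing R) s with hσ
  have hσ0 : σ ≠ 0 := alg_ne_zero hs0
  have hinv : σ⁻¹ ∈ locR M hM := by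
    refine mem_locR.2 ⟨s, hs, ?_⟩
    rw [smul_eq_alg_mul, ← hσ, mul_inv_cancel₀ hσ0]
    exact Submodule.one_le.1 le_rfl
  have := Submodule.mul_mem_mul h hinv
  rwa [smul_eq_alg_mul, ← hσ, mul_comm σ z, mul_assoc, mul_inv_cancel₀ hσ0, mul_one] at this

theorem exists_smul_mem_of_mem_mul_locR {M : Ideal R} {hM : M.IsPrime}
    {z : FractionRing R} {X : Submodule R (FractionRing R)} (h : z ∈ X * locR M hM) :
    ∃ s : R, s ∉ M ∧ s • z ∈ X := by
  refine Submodule.mul_induction_on h ?_ ?_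
  · intro m hm n hn
    obtain ⟨t, ht, htn⟩ := mem_locR.1 hn
    obtain ⟨r, hr⟩ := mem_one_iff.1 htn
    refine ⟨t, ht, ?_⟩
    have : t • (m * n) = r • m := by
      rw [smul_eq_alg_mul, smul_eq_alg_mul, hr, smul_eq_alg_mul]; ring
    rw [this]
    exact X.smul_mem r hm
  · rintro x y ⟨s, hs, hsx⟩ ⟨t, ht, hty⟩
    refine ⟨s * t, fun h => (hM.mem_or_mem h).elim hs ht, ?_⟩
    rw [smul_add]
    have h1 : (s * t) • x = t • (s • x) := by rw [← smul_smul, smul_comm]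
    have h2 : (s * t) • y = s • (t • y) := by rw [← smul_smul]
    rw [h1, h2]
    exact add_mem (X.smul_mem t hsx) (X.smul_mem s hty)

end Frac

end TAux
namespace TAux

section Val

variable {R : Type*} [CommRing R] [IsDomain R]

/-- Comparability of principal `R_M`-submodules of the fraction field. -/
def LocComp (M : Ideal R) (hM : M.IsPrime) : Prop :=
  ∀ x y : FractionRing R,
    (∃ w ∈ locR M hM, x * w = y) ∨ ∃ w ∈ locR M hM, y * w = x

theorem locComp_of_valuation (M : Ideal R) (hM : M.IsPrime)
    (hv : ValuationRing (@Localization.AtPrime R _ M hM)) : LocComp M hM := by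
  haveI := hM
  haveI := hv
  set K := FractionRing R
  set Loc := Localization.AtPrime M
  have hunit : ∀ y : M.primeCompl, IsUnit (algebraMap R K y) := by
    rintro ⟨s, hs⟩
    have hs0 : s ≠ 0 := fun h0 => hs (h0 ▸ M.zero_mem)
    exact (alg_ne_zero hs0).isUnit
  set φ : Loc →+* K := IsLocalization.lift hunit with hφ
  have hφalg : ∀ r : R, φ (algebraMap R Loc r) = algebraMap R K r := fun r =>
    IsLocalization.lift_eq hunit r
  have hφmem : ∀ l : Loc, φ l ∈ locR M hM := by
    intro l
    obtain ⟨⟨r, s⟩, hl : IsLocalization.mk' Loc r s = l⟩ := IsLocalization.mk'_surjective M.primeCompl l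
    refine mem_locR.2 ⟨(s : R), s.2, ?_⟩
    have := congrArg φ (IsLocalization.mk'_spec Loc r s)
    rw [map_mul, hφalg, hφalg, hl] at this
    rw [smul_eq_alg_mul, mul_comm]
    rw [this]
    exact mem_one_iff.2 ⟨r, rfl⟩
  intro x y
  rcases eq_or_ne x 0 with rfl | hx0
  · exact Or.inr ⟨0, zero_mem _, mul_zero y⟩
  rcases eq_or_ne y 0 with rfl | hy0
  · exact Or.inl ⟨0, zero_mem _, mul_zero x⟩
  obtain ⟨⟨a, s⟩, hx : IsLocalization.mk' K a s = x⟩ := IsLocalization.mk'_surjective (nonZeroDivisors R) x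
  obtain ⟨⟨b, t⟩, hy : IsLocalization.mk' K b t = y⟩ := IsLocalization.mk'_surjective (nonZeroDivisors R) y
  have hxs : x * algebraMap R K s = algebraMap R K a := by
    rw [← hx]; exact IsLocalization.mk'_spec K a s
  have hyt : y * algebraMap R K t = algebraMap R K b := by
    rw [← hy]; exact IsLocalization.mk'_spec K b t
  have hst0 : algebraMap R K ((s : R) * (t : R)) ≠ 0 :=
    alg_ne_zero (mul_ne_zero (nonZeroDivisors.ne_zero s.2) (nonZeroDivisors.ne_zero t.2))
  obtain ⟨γ, hγ⟩ := ValuationRing.cond (algebraMap R Loc (a * t)) (algebraMap R Loc (b * s))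
  have hxa : algebraMap R K (a * (t : R)) = x * algebraMap R K ((s : R) * (t : R)) := by
    rw [map_mul, map_mul, ← hxs]; ring
  have hyb : algebraMap R K (b * (s : R)) = y * algebraMap R K ((s : R) * (t : R)) := by
    rw [map_mul, map_mul, ← hyt]; ring
  rcases hγ with hγ | hγ
  · left
    refine ⟨φ γ, hφmem γ, ?_⟩
    have := congrArg φ hγ
    rw [map_mul, hφalg, hφalg, hxa, hyb] at this
    have h2 : x * φ γ * algebraMap R K ((s : R) * (t : R)) =
        y * algebraMap R K ((s : R) * (t : R)) := by
      rw [← this]; ring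
    exact mul_right_cancel₀ hst0 h2
  · right
    refine ⟨φ γ, hφmem γ, ?_⟩
    have := congrArg φ hγ
    rw [map_mul, hφalg, hφalg, hxa, hyb] at this
    have h2 : y * φ γ * algebraMap R K ((s : R) * (t : R)) =
        x * algebraMap R K ((s : R) * (t : R)) := by
      rw [← this]; ring
    exact mul_right_cancel₀ hst0 h2

theorem smul_locR_le_of_mul {M : Ideal R} {hM : M.IsPrime} {x y : FractionRing R}
    (h : ∃ w ∈ locR M hM, x * w = y) : y • locR M hM ≤ x • locR M hM := by
  obtain ⟨w, hw, rfl⟩ := h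
  intro z hz
  obtain ⟨u, hu, rfl⟩ := mem_smul_iff.1 hz
  exact mem_smul_iff.2 ⟨w * u, locR_mul_mem hw hu, by ring⟩

theorem locComp_smul {M : Ideal R} {hM : M.IsPrime} (hc : LocComp M hM)
    (x y : FractionRing R) :
    x • locR M hM ≤ y • locR M hM ∨ y • locR M hM ≤ x • locR M hM := by
  rcases hc x y with h | h
  · exact Or.inr (smul_locR_le_of_mul h)
  · exact Or.inl (smul_locR_le_of_mul h)

theorem exists_gen {M : Ideal R} {hM : M.IsPrime} (hc : LocComp M hM)
    {X : Submodule R (FractionRing R)} (hfg : X.FG) (hX : X ≠ ⊥) :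
    ∃ g ∈ X, g ≠ 0 ∧ X * locR M hM = g • locR M hM := by
  obtain ⟨T, hT⟩ := hfg
  have aux : ∀ T' : Finset (FractionRing R), ∃ g ∈ Submodule.span R (T' : Set (FractionRing R)),
      Submodule.span R (T' : Set (FractionRing R)) * locR M hM ≤ g • locR M hM := by
    classical
    intro T'
    induction T' using Finset.induction_on with
    | empty =>
        exact ⟨0, zero_mem _, by
          rw [Finset.coe_empty, Submodule.span_empty, Submodule.bot_mul]; exact bot_le⟩
    | @insert a T'' ha ih =>
        obtain ⟨g, hg, hle⟩ := ih
        have hspan : Submodule.span R (↑(insert a T'') : Set (FractionRing R)) =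
            Submodule.span R {a} ⊔ Submodule.span R (T'' : Set (FractionRing R)) := by
          rw [Finset.coe_insert, Submodule.span_insert]
        rcases locComp_smul hc a g with h | h
        · refine ⟨g, ?_, ?_⟩
          · exact hspan ▸ le_sup_right (α := Submodule R (FractionRing R)) hg
          · rw [hspan, Submodule.sup_mul, Submodule.span_singleton_mul]
            exact sup_le (by
              calc a • locR M hM ≤ g • locR M hM := h) hle
        · refine ⟨a, ?_, ?_⟩
          · exact hspan ▸ le_sup_left (α := Submodule R (FractionRing R))
              (Submodule.mem_span_singleton_self a)
          · rw [hspan, Submodule.sup_mul, Submodule.span_singleton_mul]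
            exact sup_le le_rfl (hle.trans h)
  obtain ⟨g, hg, hle⟩ := aux T
  rw [hT] at hg hle
  have hge : g • locR M hM ≤ X * locR M hM := by
    rw [← Submodule.span_singleton_mul]
    exact mul_le_mul_left (Submodule.span_le.2 (by simpa using hg)) _
  have heq : X * locR M hM = g • locR M hM := le_antisymm hle hge
  obtain ⟨x, hx, hx0⟩ := Submodule.exists_mem_ne_zero_of_ne_bot hX
  have hxg : x ∈ g • locR M hM := heq ▸ le_mul_locR hM X hx
  obtain ⟨u, _, hu⟩ := mem_smul_iff.1 hxg
  exact ⟨g, hg, fun h0 => hx0 (by rw [← hu, h0, zero_mul]), heq⟩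

theorem exists_denom {M : Ideal R} (hM : M.IsPrime) {X : Submodule R (FractionRing R)}
    (hfg : X.FG) (hX : X ≤ locR M hM) :
    ∃ s : R, s ∉ M ∧ ∀ x ∈ X, s • x ∈ (1 : Submodule R (FractionRing R)) := by
  classical
  obtain ⟨T, hT⟩ := hfg
  have aux : ∀ T' : Finset (FractionRing R), (T' : Set (FractionRing R)) ⊆ locR M hM →
      ∃ s : R, s ∉ M ∧ ∀ t ∈ T', s • t ∈ (1 : Submodule R (FractionRing R)) := by
    intro T'
    induction T' using Finset.induction_on with
    | empty => exact fun _ => ⟨1, (Ideal.ne_top_iff_one M).1 hM.ne_top, by simp⟩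
    | @insert a T'' ha ih =>
        intro hsub
        obtain ⟨s, hs, h⟩ := ih fun t ht =>
          hsub (Finset.mem_coe.2 (Finset.mem_insert.2 (Or.inr (Finset.mem_coe.1 ht))))
        obtain ⟨t, ht, hta⟩ := mem_locR.1 (hsub (Finset.mem_coe.2 (Finset.mem_insert_self a T'')))
        refine ⟨s * t, fun hmem => (hM.mem_or_mem hmem).elim hs ht, ?_⟩
        intro x hx
        rcases Finset.mem_insert.1 hx with rfl | hx
        · rw [← smul_smul]
          exact Submodule.smul_mem _ s hta
        · rw [mul_comm, ← smul_smul]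
          exact Submodule.smul_mem _ t (h x hx)
  obtain ⟨s, hs, h⟩ := aux T (by rw [← Submodule.span_le, hT]; exact hX)
  refine ⟨s, hs, ?_⟩
  intro x hx
  rw [← hT] at hx
  refine Submodule.span_induction ?_ (by simp) ?_ ?_ hx
  · exact fun t ht => h t ht
  · intro y z _ _ hy hz
    rw [smul_add]; exact add_mem hy hz
  · intro r y _ hy
    rw [smul_comm]; exact Submodule.smul_mem _ r hy

theorem vOp_le_mul_locR {M : Ideal R} {hM : M.IsPrime} (hc : LocComp M hM)
    {J : Submodule R (FractionRing R)} (hb : J ≠ ⊥) (hfg : J.FG) :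
    vOp R (FractionRing R) J ≤ J * locR M hM := by
  obtain ⟨g, hgJ, hg0, hgen⟩ := exists_gen hc hfg hb
  have hJle : J ≤ g • locR M hM := hgen ▸ le_mul_locR hM J
  have hinvle : g⁻¹ • J ≤ locR M hM := by
    intro z hz
    obtain ⟨u, hu, rfl⟩ := mem_smul_iff.1 hz
    obtain ⟨w, hw, hwu⟩ := mem_smul_iff.1 (hJle hu)
    rwa [← hwu, ← mul_assoc, inv_mul_cancel₀ hg0, one_mul]
  have hinvfg : (g⁻¹ • J).FG := by
    classical
    obtain ⟨T, hT⟩ := hfg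
    refine ⟨T.image (g⁻¹ * ·), ?_⟩
    have hset : ((g⁻¹ * ·) '' (T : Set (FractionRing R))) =
        g⁻¹ • (T : Set (FractionRing R)) := by
      ext z
      constructor
      · rintro ⟨x, hx, rfl⟩; exact ⟨x, hx, rfl⟩
      · rintro ⟨x, hx, rfl⟩; exact ⟨x, hx, rfl⟩
    rw [Finset.coe_image, hset, ← Submodule.smul_span, hT]
  obtain ⟨s, hs, hden⟩ := exists_denom hM hinvfg hinvle
  intro z hz
  have hτ : algebraMap R (FractionRing R) s * g⁻¹ ∈ 1 / J := by
    refine mem_div.2 fun y hy => ?_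
    have : algebraMap R (FractionRing R) s * g⁻¹ * y = s • (g⁻¹ * y) := by
      rw [smul_eq_alg_mul]; ring
    rw [this]
    exact hden _ (mem_smul_iff.2 ⟨y, hy, rfl⟩)
  have hz1 : z * (algebraMap R (FractionRing R) s * g⁻¹) ∈ (1 : Submodule R (FractionRing R)) :=
    mem_div.1 hz _ hτ
  have : s • (g⁻¹ * z) ∈ (1 : Submodule R (FractionRing R)) := by
    have he : s • (g⁻¹ * z) = z * (algebraMap R (FractionRing R) s * g⁻¹) := by
      rw [smul_eq_alg_mul]; ring
    rw [he]; exact hz1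
  have hzmem : g⁻¹ * z ∈ locR M hM := mem_locR.2 ⟨s, hs, this⟩
  have : z ∈ g • locR M hM := mem_smul_iff.2 ⟨g⁻¹ * z, hzmem, by
    rw [← mul_assoc, mul_inv_cancel₀ hg0, one_mul]⟩
  rwa [← hgen] at this

theorem tOp_mul_locR {M : Ideal R} {hM : M.IsPrime} (hc : LocComp M hM)
    (X : Submodule R (FractionRing R)) :
    tOp R (FractionRing R) X * locR M hM = X * locR M hM := by
  refine le_antisymm ?_ (mul_le_mul_left (le_tOp X) _)
  have h1 : tOp R (FractionRing R) X ≤ X * locR M hM :=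
    tOp_le fun J hb hfg hle => (vOp_le_mul_locR hc hb hfg).trans (mul_le_mul_left hle _)
  calc tOp R (FractionRing R) X * locR M hM ≤ X * locR M hM * locR M hM :=
        mul_le_mul_left h1 _
  _ = X * locR M hM := mul_locR_mul_locR hM X

end Val

end TAux
namespace TAux

section Zorn

variable {R : Type*} [CommRing R] [IsDomain R]

theorem exists_le_of_fg_le_iSup {ι : Type*} [Nonempty ι]
    {f : ι → Submodule R (FractionRing R)} (hdir : Directed (· ≤ ·) f)
    {J : Submodule R (FractionRing R)} (hfg : J.FG) (hle : J ≤ ⨆ i, f i) :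
    ∃ i, J ≤ f i := by
  classical
  obtain ⟨T, hT⟩ := hfg
  choose! g hg using fun t (ht : t ∈ ⨆ i, f i) => (Submodule.mem_iSup_of_directed f hdir).1 ht
  obtain ⟨z, hz⟩ := hdir.finset_le (T.image g)
  refine ⟨z, ?_⟩
  rw [← hT, Submodule.span_le]
  intro t ht
  have htm : t ∈ ⨆ i, f i := hle (hT ▸ Submodule.subset_span ht)
  exact hz (g t) (Finset.mem_image_of_mem g (Finset.mem_coe.1 ht)) (hg t htm)

theorem isTIdeal_sSup_chain {c : Set (Ideal R)} (hne : c.Nonempty)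
    (hch : IsChain (· ≤ ·) c) (hT : ∀ J ∈ c, IsTIdeal R J) : IsTIdeal R (sSup c) := by
  haveI : Nonempty c := hne.to_subtype
  have hdirI : Directed (· ≤ ·) (fun J : c => J.1) :=
    directedOn_iff_directed.1 hch.directedOn
  have hdir2 : Directed (· ≤ ·) (fun J : c => idealToFrac R J.1) := fun i j => by
    obtain ⟨k, hik, hjk⟩ := hdirI i j
    exact ⟨k, idealToFrac_mono hik, idealToFrac_mono hjk⟩
  have hmap : idealToFrac R (sSup c) = ⨆ J : c, idealToFrac R J.1 := by
    rw [sSup_eq_iSup']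
    exact Submodule.map_iSup _ _
  unfold IsTIdeal
  refine le_antisymm (tOp_le fun J' hb hfg hle => ?_) (le_tOp _)
  rw [hmap] at hle
  obtain ⟨J0, hle0⟩ := exists_le_of_fg_le_iSup hdir2 hfg hle
  have h1 : vOp R (FractionRing R) J' ≤ idealToFrac R J0.1 := by
    have := vOp_le_tOp hb hfg hle0
    rwa [hT J0.1 J0.2] at this
  refine h1.trans ?_
  rw [hmap]
  exact le_iSup (fun J : c => idealToFrac R J.1) J0

theorem exists_tmax {I : Ideal R} (hb : I ≠ ⊥) (ht : I ≠ ⊤) (hT : IsTIdeal R I) :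
    ∃ M : Ideal R, IsTMaximal R M ∧ I ≤ M := by
  set s : Set (Ideal R) := {J | J ≠ ⊤ ∧ IsTIdeal R J ∧ I ≤ J} with hs
  have hzorn : ∀ c ⊆ s, IsChain (· ≤ ·) c → ∀ y ∈ c, ∃ ub ∈ s, ∀ z ∈ c, z ≤ ub := by
    intro c hcs hch y hy
    have hne : c.Nonempty := ⟨y, hy⟩
    refine ⟨sSup c, ⟨?_, ?_, ?_⟩, fun z hz => le_sSup hz⟩
    · intro htop
      have h1 : (1 : R) ∈ sSup c := htop ▸ Submodule.mem_top
      have hdir : DirectedOn (· ≤ ·) c := hch.directedOn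
      obtain ⟨J, hJc, hJ1⟩ := (Submodule.mem_sSup_of_directed hne hdir).1 h1
      exact (hcs hJc).1 ((Ideal.eq_top_iff_one J).2 hJ1)
    · exact isTIdeal_sSup_chain hne hch fun J hJ => (hcs hJ).2.1
    · exact ((hcs hy).2.2).trans (le_sSup hy)
  obtain ⟨m, hIm, hm⟩ := zorn_le_nonempty₀ s hzorn I ⟨ht, hT, le_rfl⟩
  have hmtop : m ≠ ⊤ := hm.1.1
  have hmT : IsTIdeal R m := hm.1.2.1
  have hstep : ∀ x : R, x ∉ m →
      tOp R (FractionRing R)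
        (idealToFrac R m ⊔ Submodule.span R {algebraMap R (FractionRing R) x}) = 1 := by
    intro x hx
    set A := tOp R (FractionRing R)
      (idealToFrac R m ⊔ Submodule.span R {algebraMap R (FractionRing R) x}) with hA
    have hA1 : A ≤ 1 := tOp_le_one (sup_le (idealToFrac_le_one m)
      (Submodule.span_le.2 (by
        intro w hw
        rcases hw with rfl
        exact mem_one_iff.2 ⟨x, rfl⟩)))
    have hAfrac : idealToFrac R (fracToIdeal A) = A := idealToFrac_fracToIdeal hA1
    have hAT : IsTIdeal R (fracToIdeal A) := isTIdeal_fracToIdeal hA1 (tOp_idem _)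
    have hmle : m ≤ fracToIdeal A := by
      intro r hr
      refine mem_fracToIdeal.2 ?_
      exact le_tOp _ (le_sup_left (α := Submodule R (FractionRing R))
        (alg_mem_idealToFrac hr))
    have hxA : x ∈ fracToIdeal A :=
      mem_fracToIdeal.2 (le_tOp _ (le_sup_right (α := Submodule R (FractionRing R))
        (Submodule.mem_span_singleton_self _)))
    by_cases htop : fracToIdeal A = ⊤
    · rw [← hAfrac, htop, idealToFrac_top]
    · exfalso
      have hmem : fracToIdeal A ∈ s := ⟨htop, hAT, hm.1.2.2.trans hmle⟩
      exact hx ((hm.2 hmem hmle) hxA)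
  have hprime : m.IsPrime := by
    refine ⟨hmtop, ?_⟩
    intro a b hab
    by_contra hcon
    push_neg at hcon
    obtain ⟨ha, hb2⟩ := hcon
    have ha0 : a ≠ 0 := fun h => ha (h ▸ m.zero_mem)
    have hb0 : b ≠ 0 := fun h => hb2 (h ▸ m.zero_mem)
    set Fm := idealToFrac R m with hFm
    set Sa := Submodule.span R {algebraMap R (FractionRing R) a} with hSa
    set Sb := Submodule.span R {algebraMap R (FractionRing R) b} with hSb
    have hSa1 : Sa ≤ 1 := Submodule.span_le.2 (by
      intro w hw; rcases hw with rfl; exact mem_one_iff.2 ⟨a, rfl⟩)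
    have hSb1 : Sb ≤ 1 := Submodule.span_le.2 (by
      intro w hw; rcases hw with rfl; exact mem_one_iff.2 ⟨b, rfl⟩)
    have hAb : Fm ⊔ Sa ≠ ⊥ := fun h => by
      have : algebraMap R (FractionRing R) a ∈ (⊥ : Submodule R (FractionRing R)) :=
        h ▸ le_sup_right (α := Submodule R (FractionRing R))
          (Submodule.mem_span_singleton_self _)
      exact alg_ne_zero ha0 (Submodule.mem_bot _ |>.1 this)
    have hBb : Fm ⊔ Sb ≠ ⊥ := fun h => by
      have : algebraMap R (FractionRing R) b ∈ (⊥ : Submodule R (FractionRing R)) :=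
        h ▸ le_sup_right (α := Submodule R (FractionRing R))
          (Submodule.mem_span_singleton_self _)
      exact alg_ne_zero hb0 (Submodule.mem_bot _ |>.1 this)
    have hmulle : (Fm ⊔ Sa) * (Fm ⊔ Sb) ≤ Fm := by
      refine Submodule.mul_le.2 fun u hu v hv => ?_
      obtain ⟨u1, hu1, u2, hu2, rfl⟩ := Submodule.mem_sup.1 hu
      obtain ⟨v1, hv1, v2, hv2, rfl⟩ := Submodule.mem_sup.1 hv
      obtain ⟨r1, hr1, rfl⟩ := mem_idealToFrac.1 hu1
      obtain ⟨r2, hr2, rfl⟩ := mem_idealToFrac.1 hv1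
      obtain ⟨q1, hq1⟩ := Submodule.mem_span_singleton.1 hu2
      obtain ⟨q2, hq2⟩ := Submodule.mem_span_singleton.1 hv2
      rw [← hq1, ← hq2]
      have expand : (algebraMap R (FractionRing R) r1 + q1 • algebraMap R (FractionRing R) a) *
          (algebraMap R (FractionRing R) r2 + q2 • algebraMap R (FractionRing R) b) =
          algebraMap R (FractionRing R) (r1 * r2) +
          (q2 • algebraMap R (FractionRing R) (r1 * b) +
          (q1 • algebraMap R (FractionRing R) (a * r2) +
          (q1 * q2) • algebraMap R (FractionRing R) (a * b))) := by
        simp only [smul_eq_alg_mul, map_mul]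
        ring
      rw [expand]
      refine add_mem (alg_mem_idealToFrac (Ideal.mul_mem_right _ _ hr1)) ?_
      refine add_mem (Submodule.smul_mem _ _
        (alg_mem_idealToFrac (Ideal.mul_mem_right _ _ hr1))) ?_
      refine add_mem (Submodule.smul_mem _ _
        (alg_mem_idealToFrac (Ideal.mul_mem_left _ _ hr2))) ?_
      exact Submodule.smul_mem _ _ (alg_mem_idealToFrac hab)
    have hone := tOp_mul_eq_one (sup_le (idealToFrac_le_one m) hSa1)
      (sup_le (idealToFrac_le_one m) hSb1) hAb hBb (hstep a ha) (hstep b hb2)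
    have h1m : (1 : Submodule R (FractionRing R)) ≤ Fm := by
      rw [← hone]
      have := tOp_mono hmulle
      rwa [hmT] at this
    have : (1 : FractionRing R) ∈ Fm := h1m (Submodule.one_le.1 le_rfl)
    obtain ⟨r, hrm, hr1⟩ := mem_idealToFrac.1 this
    have : r = 1 := algInj (by rw [hr1, map_one])
    exact hmtop ((Ideal.eq_top_iff_one m).2 (this ▸ hrm))
  refine ⟨m, ⟨?_, hmtop, hprime, hmT, ?_⟩, hIm⟩
  · intro h
    exact hb (le_bot_iff.1 (h ▸ hIm))
  · intro J hJtop hJT hmJ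
    exact le_antisymm (hm.2 ⟨hJtop, hJT, hm.1.2.2.trans hmJ⟩ hmJ) hmJ

theorem mem_one_of_forall_locR {z : FractionRing R}
    (h : ∀ M : Ideal R, ∀ htm : IsTMaximal R M, z ∈ locR M htm.isPrime) :
    z ∈ (1 : Submodule R (FractionRing R)) := by
  set D : Ideal R :=
    Submodule.comap (LinearMap.toSpanSingleton R (FractionRing R) z) 1 with hD
  have hmemD : ∀ r : R, r ∈ D ↔ r • z ∈ (1 : Submodule R (FractionRing R)) :=
    fun r => Iff.rfl
  by_cases hDtop : D = ⊤
  · have h1 : (1 : R) ∈ D := hDtop ▸ Submodule.mem_top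
    have := (hmemD 1).1 h1
    rwa [one_smul] at this
  · obtain ⟨⟨a, sden⟩, hzs : IsLocalization.mk' (FractionRing R) a sden = z⟩ :=
        IsLocalization.mk'_surjective (nonZeroDivisors R) z
    have hsz : (sden : R) • z = algebraMap R (FractionRing R) a := by
      rw [smul_eq_alg_mul, mul_comm, ← hzs]
      exact IsLocalization.mk'_spec (FractionRing R) a sden
    have hsD : (sden : R) ∈ D := (hmemD _).2 (hsz ▸ mem_one_iff.2 ⟨a, rfl⟩)
    have hDb : D ≠ ⊥ := fun hbot => nonZeroDivisors.ne_zero sden.2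
      ((Submodule.mem_bot R).1 (hbot ▸ hsD))
    have hDT : IsTIdeal R D := by
      unfold IsTIdeal
      refine le_antisymm (tOp_le fun J hb hfg hle => ?_) (le_tOp _)
      have hzJ : z ∈ 1 / J := by
        refine mem_div.2 fun y hy => ?_
        obtain ⟨r, hrD, rfl⟩ := mem_idealToFrac.1 (hle hy)
        have : z * algebraMap R (FractionRing R) r = r • z := by
          rw [smul_eq_alg_mul, mul_comm]
        rw [this]
        exact (hmemD r).1 hrD
      intro y hy
      have hy1 : y ∈ (1 : Submodule R (FractionRing R)) :=
        vOp_le_one (hle.trans (idealToFrac_le_one D)) hy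
      obtain ⟨r, hry⟩ := mem_one_iff.1 hy1
      have hyz : y * z ∈ (1 : Submodule R (FractionRing R)) := mem_div.1 hy z hzJ
      have hrD : r ∈ D := by
        refine (hmemD r).2 ?_
        have : r • z = y * z := by rw [smul_eq_alg_mul, hry]
        rwa [this]
      exact mem_idealToFrac.2 ⟨r, hrD, hry⟩
    obtain ⟨M, htm, hle⟩ := exists_tmax hDb hDtop hDT
    obtain ⟨t, htM, htz⟩ := mem_locR.1 (h M htm)
    exact absurd (hle ((hmemD t).2 htz)) htM

end Zorn

end TAux
namespace TAux

section Helpers2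

variable {R : Type*} [CommRing R] [IsDomain R]

theorem mul_locR_mul {M : Ideal R} (hM : M.IsPrime) (X Y : Submodule R (FractionRing R)) :
    (X * Y) * locR M hM = (X * locR M hM) * (Y * locR M hM) := by
  have : (X * locR M hM) * (Y * locR M hM) = (X * Y) * (locR M hM * locR M hM) := by ring
  rw [this, locR_mul_locR]

theorem mem_self_smul {M : Ideal R} (hM : M.IsPrime) (x : FractionRing R) :
    x ∈ x • locR M hM :=
  mem_smul_iff.2 ⟨1, one_mem_locR hM, mul_one x⟩

theorem smul_le_mul_locR {M : Ideal R} {hM : M.IsPrime} {x : FractionRing R}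
    {X : Submodule R (FractionRing R)} (hx : x ∈ X * locR M hM) :
    x • locR M hM ≤ X * locR M hM := by
  intro z hz
  obtain ⟨w, hw, rfl⟩ := mem_smul_iff.1 hz
  have := Submodule.mul_mem_mul hx hw
  rwa [mul_locR_mul_locR] at this

theorem eq_locR_of_one_mem {M : Ideal R} {hM : M.IsPrime}
    {X : Submodule R (FractionRing R)} (hX : X ≤ 1) (h1 : (1 : FractionRing R) ∈ X * locR M hM) :
    X * locR M hM = locR M hM := by
  refine le_antisymm ?_ ?_
  · have := mul_le_mul_left hX (locR M hM)
    rwa [Submodule.one_mul] at this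
  · intro w hw
    have := Submodule.mul_mem_mul h1 hw
    rwa [mul_locR_mul_locR, one_mul] at this

theorem smul_smul_submodule (cd : FractionRing R) (c d : FractionRing R)
    (X : Submodule R (FractionRing R)) (h : cd = c * d) : cd • X = c • (d • X) := by
  rw [h, mul_smul]

theorem smul_cancel {c : FractionRing R} (hc : c ≠ 0) {X Y : Submodule R (FractionRing R)}
    (h : c • X = c • Y) : X = Y := by
  have := congrArg (fun Z : Submodule R (FractionRing R) => c⁻¹ • Z) h
  simpa [smul_smul, inv_mul_cancel₀ hc] using this

theorem smul_mul_smul' (x y : FractionRing R) (A B : Submodule R (FractionRing R)) :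
    (x • A) * (y • B) = (x * y) • (A * B) := by
  rw [smul_mul, mul_smul_right, smul_smul]

end Helpers2

end TAux
set_option maxHeartbeats 2000000 in
/-- **Lemma 3.5.** Let `R` be a PVMD which is Clifford `t`-regular and let `P ⊊ Q` be two
`t`-prime ideals of `R`. Then there exists a finitely generated ideal `I` of `R` such that
`P ⊊ I_t ⊆ Q`. -/
theorem exists_fg_between_tPrimes (R : Type*) [CommRing R] [IsDomain R]
    (hR : IsPVMD R) (hC : IsCliffordTRegular R)
    (P Q : Ideal R) (hP : IsTPrime R P) (hQ : IsTPrime R Q) (hPQ : P < Q) :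
    ∃ I : Ideal R, I.FG ∧
      idealToFrac R P < tOp R (FractionRing R) (idealToFrac R I) ∧
      tOp R (FractionRing R) (idealToFrac R I) ≤ idealToFrac R Q := by
  classical
  open TAux in
  obtain ⟨hPQle, a, haQ, haP⟩ := SetLike.lt_iff_le_and_exists.1 hPQ
  have ha0 : a ≠ 0 := fun h => haP (h ▸ P.zero_mem)
  set α : FractionRing R := algebraMap R (FractionRing R) a with hαdef
  have hα0 : α ≠ 0 := TAux.alg_ne_zero ha0
  set L : Submodule R (FractionRing R) := idealToFrac R P ⊔ Submodule.span R {α} with hLdef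
  set Λ : Submodule R (FractionRing R) := tOp R (FractionRing R) L with hΛdef
  have hαL : α ∈ L := le_sup_right (α := Submodule R (FractionRing R))
    (Submodule.mem_span_singleton_self α)
  have hL1 : L ≤ 1 := sup_le (TAux.idealToFrac_le_one P)
    (Submodule.span_le.2 (by rintro w rfl; exact TAux.mem_one_iff.2 ⟨a, rfl⟩))
  have hΛ1 : Λ ≤ 1 := TAux.tOp_le_one hL1
  have hPb' : idealToFrac R P ≠ ⊥ := TAux.idealToFrac_ne_bot hP.ne_bot
  have hPleL : idealToFrac R P ≤ L := le_sup_left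
  have hLb : L ≠ ⊥ := fun h => hPb' (le_bot_iff.1 (h ▸ hPleL))
  have hLΛ : L ≤ Λ := TAux.le_tOp L
  have hΛb : Λ ≠ ⊥ := fun h => hLb (le_bot_iff.1 (h ▸ hLΛ))
  have hΛt : tOp R (FractionRing R) Λ = Λ := TAux.tOp_idem L
  have hΛQ : Λ ≤ idealToFrac R Q := by
    have h1 : L ≤ idealToFrac R Q := sup_le (TAux.idealToFrac_mono hPQle)
      (Submodule.span_le.2 (by rintro w rfl; exact TAux.alg_mem_idealToFrac haQ))
    calc Λ ≤ tOp R (FractionRing R) (idealToFrac R Q) := TAux.tOp_mono h1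
    _ = idealToFrac R Q := hQ.isT
  have hfrac : IsTFracIdeal R Λ := by
    refine ⟨⟨hΛb, ⟨1, (nonZeroDivisors R).one_mem, fun b hb => ?_⟩⟩, hΛt⟩
    obtain ⟨r, hr⟩ := TAux.mem_one_iff.1 (hΛ1 hb)
    exact ⟨r, by simpa using hr⟩
  obtain ⟨J, hJ, c, hc0, heq⟩ := hC Λ hfrac
  have hJb : J ≠ ⊥ := hJ.1.1
  have hcinv0 : c⁻¹ ≠ 0 := inv_ne_zero hc0
  set X : Submodule R (FractionRing R) := c⁻¹ • J with hXdef
  set E : Submodule R (FractionRing R) := Λ * X with hEdef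
  have hEb : E ≠ ⊥ := TAux.mul_ne_bot hΛb (TAux.smul_ne_bot hcinv0 hJb)
  -- Local computation at every t-maximal ideal
  have hloc : ∀ M : Ideal R, ∀ htm : IsTMaximal R M,
      E * TAux.locR M htm.isPrime = TAux.locR M htm.isPrime := by
    intro M htm
    haveI := htm.isPrime
    have hval : ValuationRing (Localization.AtPrime M) := hR M htm
    have hcomp : TAux.LocComp M htm.isPrime := TAux.locComp_of_valuation M htm.isPrime hval
    set Rm : Submodule R (FractionRing R) := TAux.locR M htm.isPrime with hRmdef
    have hΛRm : Λ * Rm = L * Rm := TAux.tOp_mul_locR hcomp L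
    have e0 : Rm * (J * Rm) = J * Rm := by
      have h' : Rm * (J * Rm) = J * Rm * Rm := by ring
      rw [h', TAux.mul_locR_mul_locR]
    have h1 : (Λ * Rm) * (Λ * Rm) * (J * Rm) = c • (Λ * Rm) := by
      rw [← TAux.mul_locR_mul htm.isPrime Λ Λ, ← TAux.mul_locR_mul htm.isPrime (Λ * Λ) J,
        ← TAux.tOp_mul_locR hcomp (Λ * Λ * J), heq, TAux.smul_mul]
    by_cases hPM : P ≤ M
    · have hPR : idealToFrac R P * Rm ≤ α • Rm := by
        intro x hx
        rcases TAux.locComp_smul hcomp x α with hcase | hcase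
        · exact hcase (TAux.mem_self_smul htm.isPrime x)
        · exfalso
          have hαin : α ∈ idealToFrac R P * Rm :=
            (TAux.smul_le_mul_locR hx) (hcase (TAux.mem_self_smul htm.isPrime α))
          obtain ⟨s, hsM, hsα⟩ := TAux.exists_smul_mem_of_mem_mul_locR hαin
          have hcalc : s • α = algebraMap R (FractionRing R) (s * a) := by
            rw [TAux.smul_eq_alg_mul, map_mul]
          rw [hcalc] at hsα
          rcases hP.isPrime.mem_or_mem (TAux.alg_mem_idealToFrac_iff.1 hsα) with hs | ha2
          · exact hsM (hPM hs)
          · exact haP ha2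
      have hLRm : L * Rm = α • Rm := by
        rw [hLdef, Submodule.sup_mul, Submodule.span_singleton_mul]
        exact le_antisymm (sup_le hPR le_rfl) le_sup_right
      have hΛα : Λ * Rm = α • Rm := hΛRm.trans hLRm
      have e1 : (α • Rm) * (α • Rm) * (J * Rm) = (α * α) • (J * Rm) := by
        rw [TAux.smul_mul_smul', TAux.locR_mul_locR, TAux.smul_mul, e0]
      have h2 : (α * α) • (J * Rm) = (c * α) • Rm := by
        rw [hΛα] at h1
        rw [← e1, h1, smul_smul]
      have hJRm : J * Rm = (c * α⁻¹) • Rm := by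
        refine TAux.smul_cancel (mul_ne_zero hα0 hα0) ?_
        rw [h2, smul_smul]
        have hsc : α * α * (c * α⁻¹) = c * α := by
          field_simp
        rw [hsc]
      calc E * Rm = (Λ * Rm) * (X * Rm) := TAux.mul_locR_mul htm.isPrime Λ X
      _ = (α • Rm) * ((c⁻¹ * (c * α⁻¹)) • Rm) := by
          rw [hΛα, hXdef, TAux.smul_mul c⁻¹ J Rm, hJRm, smul_smul]
      _ = (α • Rm) * (α⁻¹ • Rm) := by
          rw [show c⁻¹ * (c * α⁻¹) = α⁻¹ by rw [← mul_assoc, inv_mul_cancel₀ hc0, one_mul]]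
      _ = Rm := by
          rw [TAux.smul_mul_smul', TAux.locR_mul_locR, mul_inv_cancel₀ hα0, one_smul]
    · obtain ⟨p, hpP, hpM⟩ := SetLike.not_le_iff_exists.1 hPM
      have h1m : (1 : FractionRing R) ∈ Λ * Rm := by
        refine TAux.mem_mul_locR_of_smul_mem hpM ?_
        have hps : (p : R) • (1 : FractionRing R) = algebraMap R (FractionRing R) p := by
          rw [TAux.smul_eq_alg_mul, mul_one]
        rw [hps]
        exact hLΛ (hPleL (TAux.alg_mem_idealToFrac hpP))
      have hΛRm' : Λ * Rm = Rm := TAux.eq_locR_of_one_mem hΛ1 h1m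
      have hJRm : J * Rm = c • Rm := by
        rw [hΛRm'] at h1
        rwa [TAux.locR_mul_locR, e0] at h1
      calc E * Rm = (Λ * Rm) * (X * Rm) := TAux.mul_locR_mul htm.isPrime Λ X
      _ = Rm * (c⁻¹ • (c • Rm)) := by rw [hΛRm', hXdef, TAux.smul_mul c⁻¹ J Rm, hJRm]
      _ = Rm * Rm := by rw [smul_smul, inv_mul_cancel₀ hc0, one_smul]
      _ = Rm := TAux.locR_mul_locR htm.isPrime
  -- E is contained in R
  have hE1 : E ≤ (1 : Submodule R (FractionRing R)) := by
    intro z hz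
    refine TAux.mem_one_of_forall_locR fun M htm => ?_
    have h1 := TAux.le_mul_locR htm.isPrime E hz
    rwa [hloc M htm] at h1
  -- (E)_t = R
  have htE : tOp R (FractionRing R) E = 1 := by
    by_contra hne
    have hle1 : tOp R (FractionRing R) E ≤ 1 := TAux.tOp_le_one hE1
    have hDfrac : idealToFrac R (TAux.fracToIdeal (tOp R (FractionRing R) E)) =
        tOp R (FractionRing R) E := TAux.idealToFrac_fracToIdeal hle1
    have hDT : IsTIdeal R (TAux.fracToIdeal (tOp R (FractionRing R) E)) :=
      TAux.isTIdeal_fracToIdeal hle1 (TAux.tOp_idem E)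
    have hDb : TAux.fracToIdeal (tOp R (FractionRing R) E) ≠ ⊥ := by
      intro h
      have hbot : tOp R (FractionRing R) E = ⊥ := by
        rw [← hDfrac, h]
        exact Submodule.map_bot _
      exact hEb (le_bot_iff.1 (hbot ▸ TAux.le_tOp E))
    have hDtop : TAux.fracToIdeal (tOp R (FractionRing R) E) ≠ ⊤ := fun h =>
      hne (by rw [← hDfrac, h, TAux.idealToFrac_top])
    obtain ⟨M, htm, hleD⟩ := TAux.exists_tmax hDb hDtop hDT
    have h1mem : (1 : FractionRing R) ∈ E * TAux.locR M htm.isPrime := by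
      rw [hloc M htm]
      exact TAux.one_mem_locR htm.isPrime
    obtain ⟨s, hsM, hs1⟩ := TAux.exists_smul_mem_of_mem_mul_locR h1mem
    have hsE : algebraMap R (FractionRing R) s ∈ E := by
      rwa [TAux.smul_eq_alg_mul, mul_one] at hs1
    exact hsM (hleD (TAux.mem_fracToIdeal.2 (TAux.le_tOp E hsE)))
  -- extract finitely generated ideals
  have h1tE : (1 : FractionRing R) ∈ tOp R (FractionRing R) E := by
    rw [htE]; exact Submodule.one_le.1 le_rfl
  obtain ⟨F, hFb, hFfg, hFle, hF1⟩ := (TAux.mem_tOp hEb).1 h1tE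
  have hGex : ∃ G : Submodule R (FractionRing R), G.FG ∧ G ≤ Λ ∧ F ≤ G * X := by
    obtain ⟨T, hT⟩ := hFfg
    choose! gG hGfg' hGle' hGmem' using fun t (ht : t ∈ Λ * X) => TAux.exists_fg_left ht
    have hTE : ∀ t ∈ T, t ∈ Λ * X := fun t ht =>
      hFle (hT ▸ Submodule.subset_span (Finset.mem_coe.2 ht))
    refine ⟨T.sup gG, ?_, ?_, ?_⟩
    · exact Finset.sup_induction Submodule.fg_bot (fun a ha b hb => ha.sup hb)
        (fun t ht => hGfg' t (hTE t ht))
    · exact Finset.sup_le fun t ht => hGle' t (hTE t ht)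
    · rw [← hT, Submodule.span_le]
      intro t ht
      exact mul_le_mul_left (Finset.le_sup (f := gG) (Finset.mem_coe.1 ht)) X
        (hGmem' t (hTE t (Finset.mem_coe.1 ht)))
  obtain ⟨G0, hG0fg, hG0le, hFG0⟩ := hGex
  set G : Submodule R (FractionRing R) := G0 ⊔ Submodule.span R {α} with hGdef
  have hGfg : G.FG := hG0fg.sup (Submodule.fg_span_singleton α)
  have hGle : G ≤ Λ := sup_le hG0le ((Submodule.span_le.2 (by
    rintro w rfl; exact hLΛ hαL)))
  have hFG : F ≤ G * X := hFG0.trans (mul_le_mul_left le_sup_left _)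
  have hαG : α ∈ G := le_sup_right (α := Submodule R (FractionRing R))
    (Submodule.mem_span_singleton_self α)
  have hGb : G ≠ ⊥ := fun h => hα0 ((Submodule.mem_bot _).1 (h ▸ hαG))
  have hG1 : G ≤ 1 := hGle.trans hΛ1
  -- Λ ≤ G_v
  have hΛv : Λ ≤ vOp R (FractionRing R) G := by
    intro z hz
    refine TAux.mem_div.2 fun τ hτ => ?_
    have hzτF : z * τ ∈ (1 : Submodule R (FractionRing R)) / F := by
      refine TAux.mem_div.2 fun f hf => ?_
      refine Submodule.mul_induction_on (hFG hf) ?_ ?_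
      · intro g hg x hx
        have h1 : τ * g ∈ (1 : Submodule R (FractionRing R)) := TAux.mem_div.1 hτ g hg
        have h2 : z * x ∈ (1 : Submodule R (FractionRing R)) := by
          refine hE1 ?_
          exact Submodule.mul_mem_mul hz hx
        have h3 := Submodule.mul_mem_mul h1 h2
        rw [one_mul] at h3
        have h4 : z * τ * (g * x) = τ * g * (z * x) := by ring
        rwa [h4]
      · intro x y hx hy
        have h5 : z * τ * (x + y) = z * τ * x + z * τ * y := by ring
        rw [h5]
        exact add_mem hx hy
    simpa using TAux.div_le_one_of_one_mem_vOp hF1 hzτF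
  -- conclusion
  refine ⟨TAux.fracToIdeal G, ?_, ?_, ?_⟩
  · refine Submodule.fg_of_fg_map_injective (Algebra.linearMap R (FractionRing R)) ?_ ?_
    · exact TAux.algInj
    · rw [show Submodule.map (Algebra.linearMap R (FractionRing R)) (TAux.fracToIdeal G)
        = idealToFrac R (TAux.fracToIdeal G) from rfl, TAux.idealToFrac_fracToIdeal hG1]
      exact hGfg
  · rw [TAux.idealToFrac_fracToIdeal hG1, TAux.tOp_fg hGb hGfg]
    refine lt_of_le_of_ne (hPleL.trans (hLΛ.trans hΛv)) fun hcontra => ?_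
    have : α ∈ idealToFrac R P := by rw [hcontra]; exact TAux.le_vOp G hαG
    exact haP (TAux.alg_mem_idealToFrac_iff.1 this)
  · rw [TAux.idealToFrac_fracToIdeal hG1, TAux.tOp_fg hGb hGfg, ← TAux.tOp_fg hGb hGfg]
    calc tOp R (FractionRing R) G ≤ tOp R (FractionRing R) Λ := TAux.tOp_mono hGle
    _ = Λ := hΛt
    _ ≤ idealToFrac R Q := hΛQ
end

section
/- Let R be a PVMD which is Clifford t-regular and M a t-maximal ideal of R. If M belongs to T_t(R), then there exists a finitely generated ideal I of R contained in M such that M is the only t-maximal ideal of R containing I. -/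
open Pointwise

variable (R : Type*) [CommRing R]

section Gen


variable {R : Type*} [CommRing R] {K : Type*} [CommRing K] [Algebra R K]

lemma one_mem_one' : (1 : K) ∈ (1 : Submodule R K) := by
  rw [Submodule.one_eq_range]
  exact ⟨1, by simp⟩

lemma mul_mem_one {a b : K} (ha : a ∈ (1 : Submodule R K)) (hb : b ∈ (1 : Submodule R K)) :
    a * b ∈ (1 : Submodule R K) := by
  have := Submodule.mul_mem_mul ha hb
  rwa [mul_one (1 : Submodule R K)] at this

lemma div_antitone {A B : Submodule R K} (h : A ≤ B) : 1 / B ≤ 1 / A := fun w hw =>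
  Submodule.mem_div_iff_forall_mul_mem.2 fun a haA =>
    Submodule.mem_div_iff_forall_mul_mem.1 hw a (h haA)

lemma le_vOp (A : Submodule R K) : A ≤ vOp R K A := fun a ha =>
  Submodule.mem_div_iff_forall_mul_mem.2 fun y hy => by
    rw [mul_comm]; exact Submodule.mem_div_iff_forall_mul_mem.1 hy a ha

lemma vOp_mono {A B : Submodule R K} (h : A ≤ B) : vOp R K A ≤ vOp R K B :=
  div_antitone (div_antitone h)

lemma one_div_one_div_one_div (A : Submodule R K) : 1 / (1 / (1 / A)) = 1 / A :=
  le_antisymm (div_antitone (le_vOp A)) (le_vOp (1 / A))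

lemma vOp_idem (A : Submodule R K) : vOp R K (vOp R K A) = vOp R K A := by
  unfold vOp
  rw [one_div_one_div_one_div]

lemma one_div_one' : (1 : Submodule R K) / 1 = 1 := by
  apply le_antisymm
  · intro w hw
    have := Submodule.mem_div_iff_forall_mul_mem.1 hw 1 one_mem_one'
    rwa [mul_one] at this
  · intro a ha
    exact Submodule.mem_div_iff_forall_mul_mem.2 fun y hy => mul_mem_one ha hy

lemma vOp_one : vOp R K 1 = 1 := by
  unfold vOp
  rw [one_div_one', one_div_one']

lemma vOp_le_tOp {G A : Submodule R K} (h0 : G ≠ ⊥) (hfg : G.FG) (hle : G ≤ A) :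
    vOp R K G ≤ tOp R K A :=
  le_iSup₂_of_le G (⟨h0, hfg, hle⟩ : G ∈ {J : Submodule R K | J ≠ ⊥ ∧ J.FG ∧ J ≤ A}) le_rfl

lemma tOp_le {A C : Submodule R K} (h : ∀ G : Submodule R K, G ≠ ⊥ → G.FG → G ≤ A → vOp R K G ≤ C) :
    tOp R K A ≤ C :=
  iSup₂_le fun G hG => h G hG.1 hG.2.1 hG.2.2

lemma mem_tOp_of_mem {A : Submodule R K} {a : K} (ha : a ∈ A) : a ∈ tOp R K A := by
  rcases eq_or_ne a 0 with rfl | h0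
  · exact zero_mem _
  · exact vOp_le_tOp (G := Submodule.span R {a})
      (by simpa [Ne, Submodule.span_singleton_eq_bot] using h0)
      (Submodule.fg_span_singleton a)
      ((Submodule.span_singleton_le_iff_mem a A).2 ha)
      (le_vOp _ (Submodule.mem_span_singleton_self a))

lemma le_tOp (A : Submodule R K) : A ≤ tOp R K A := fun _ ha => mem_tOp_of_mem ha

lemma tOp_mono {A B : Submodule R K} (h : A ≤ B) : tOp R K A ≤ tOp R K B :=
  tOp_le fun G h0 hfg hle => vOp_le_tOp h0 hfg (hle.trans h)

lemma tOp_le_one {A : Submodule R K} (h : A ≤ 1) : tOp R K A ≤ 1 :=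
  tOp_le fun _ _ _ hle => by
    have := vOp_mono (hle.trans h)
    rwa [vOp_one] at this

lemma tOp_one : tOp R K 1 = 1 :=
  le_antisymm (tOp_le_one le_rfl) (le_tOp 1)

lemma tOp_bot : tOp R K ⊥ = ⊥ :=
  le_antisymm (tOp_le fun G h0 _ hle => absurd (le_bot_iff.1 hle) h0) bot_le

/-- Key extraction lemma: a f.g. submodule below `tOp A` is below `vOp G'` for a single
finitely generated nonzero `G' ≤ A`. -/
lemma fg_le_tOp {A G : Submodule R K} (hA : A ≠ ⊥) (hfg : G.FG) (hle : G ≤ tOp R K A) :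
    ∃ G' : Submodule R K, G' ≠ ⊥ ∧ G'.FG ∧ G' ≤ A ∧ G ≤ vOp R K G' := by
  obtain ⟨a, haA, ha0⟩ := (Submodule.ne_bot_iff A).1 hA
  set S := {J : Submodule R K | J ≠ ⊥ ∧ J.FG ∧ J ≤ A} with hS
  have hne : S.Nonempty := ⟨Submodule.span R {a},
    by rwa [Ne, Submodule.span_singleton_eq_bot], Submodule.fg_span_singleton a,
    (Submodule.span_singleton_le_iff_mem a A).2 haA⟩
  have hdir : DirectedOn (· ≤ ·) ((fun J => vOp R K J) '' S) := by
    rintro _ ⟨G₁, hG₁, rfl⟩ _ ⟨G₂, hG₂, rfl⟩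
    refine ⟨vOp R K (G₁ ⊔ G₂), ⟨G₁ ⊔ G₂, ⟨?_, hG₁.2.1.sup hG₂.2.1, sup_le hG₁.2.2 hG₂.2.2⟩, rfl⟩,
      vOp_mono le_sup_left, vOp_mono le_sup_right⟩
    intro hbot
    exact hG₁.1 (le_bot_iff.1 (hbot ▸ le_sup_left))
  have hcompact := (Submodule.fg_iff_compact G).1 hfg
  have htop : tOp R K A = sSup ((fun J => vOp R K J) '' S) := by
    rw [sSup_image]; rfl
  rw [htop] at hle
  obtain ⟨_, ⟨G', hG', rfl⟩, hGle⟩ :=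
    (CompleteLattice.isCompactElement_iff_le_of_directed_sSup_le (Submodule R K) G).1 hcompact _
      (hne.image _) hdir hle
  exact ⟨G', hG'.1, hG'.2.1, hG'.2.2, hGle⟩

lemma exists_of_mem_tOp {A : Submodule R K} {z : K} (hz : z ∈ tOp R K A) (hz0 : z ≠ 0) :
    ∃ G : Submodule R K, G ≠ ⊥ ∧ G.FG ∧ G ≤ A ∧ z ∈ vOp R K G := by
  have hA : A ≠ ⊥ := by
    rintro rfl
    rw [tOp_bot] at hz
    exact hz0 hz
  obtain ⟨G', h0, hfg, hle, hv⟩ := fg_le_tOp hA (Submodule.fg_span_singleton z)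
    ((Submodule.span_singleton_le_iff_mem z _).2 hz)
  exact ⟨G', h0, hfg, hle, hv (Submodule.mem_span_singleton_self z)⟩

lemma tOp_idem (A : Submodule R K) : tOp R K (tOp R K A) = tOp R K A := by
  rcases eq_or_ne A ⊥ with rfl | hA
  · rw [tOp_bot, tOp_bot]
  refine le_antisymm (tOp_le fun G h0 hfg hle => ?_) (tOp_mono (le_tOp A))
  obtain ⟨G', h0', hfg', hle', hv⟩ := fg_le_tOp hA hfg hle
  calc vOp R K G ≤ vOp R K (vOp R K G') := vOp_mono hv
    _ = vOp R K G' := vOp_idem G'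
    _ ≤ tOp R K A := vOp_le_tOp h0' hfg' hle'

lemma span_mul_vOp_le (c : K) (G : Submodule R K) :
    Submodule.span R {c} * vOp R K G ≤ vOp R K (Submodule.span R {c} * G) := by
  rw [Submodule.mul_le]
  intro y hy v hv
  obtain ⟨s, rfl⟩ := Submodule.mem_span_singleton.1 hy
  have key : c * v ∈ vOp R K (Submodule.span R {c} * G) := by
    refine Submodule.mem_div_iff_forall_mul_mem.2 fun w hw => ?_
    have hcw : c * w ∈ (1 : Submodule R K) / G := by
      refine Submodule.mem_div_iff_forall_mul_mem.2 fun g hg => ?_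
      have : w * (c * g) ∈ (1 : Submodule R K) :=
        Submodule.mem_div_iff_forall_mul_mem.1 hw _
          (Submodule.mul_mem_mul (Submodule.mem_span_singleton_self c) hg)
      rwa [show w * (c * g) = c * w * g by ring] at this
    have := Submodule.mem_div_iff_forall_mul_mem.1 hv _ hcw
    rwa [show v * (c * w) = c * v * w by ring] at this
  have := (vOp R K (Submodule.span R {c} * G)).smul_mem s key
  simpa [smul_mul_assoc] using this

/-- If a f.g. submodule is below `A * B`, it is below `A' * B` for some f.g. `A' ≤ A`. -/
lemma exists_fg_factor {A B G : Submodule R K} (hfg : G.FG) (hle : G ≤ A * B) :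
    ∃ A' : Submodule R K, A'.FG ∧ A' ≤ A ∧ G ≤ A' * B := by
  have point : ∀ x ∈ A * B, ∃ A' : Submodule R K, A'.FG ∧ A' ≤ A ∧ x ∈ A' * B := by
    intro x hx
    refine Submodule.mul_induction_on hx ?_ ?_
    · intro m hm n hn
      exact ⟨Submodule.span R {m}, Submodule.fg_span_singleton m,
        (Submodule.span_singleton_le_iff_mem m A).2 hm,
        Submodule.mul_mem_mul (Submodule.mem_span_singleton_self m) hn⟩
    · rintro x y ⟨A₁, hfg₁, hle₁, hx⟩ ⟨A₂, hfg₂, hle₂, hy⟩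
      refine ⟨A₁ ⊔ A₂, hfg₁.sup hfg₂, sup_le hle₁ hle₂, ?_⟩
      exact add_mem (mul_le_mul_left (le_sup_left : A₁ ≤ A₁ ⊔ A₂) B hx)
        (mul_le_mul_left (le_sup_right : A₂ ≤ A₁ ⊔ A₂) B hy)
  obtain ⟨s, rfl⟩ := hfg
  classical
  induction s using Finset.induction_on with
  | empty =>
      exact ⟨⊥, Submodule.fg_bot, bot_le, by simp⟩
  | @insert g s hg ih =>
      have hle' : Submodule.span R (s : Set K) ≤ A * B := by
        refine le_trans (Submodule.span_mono ?_) hle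
        simp [Finset.coe_insert, Set.subset_insert]
      obtain ⟨A₁, hfg₁, hle₁, hG₁⟩ := ih hle'
      have hgmem : g ∈ A * B := hle (Submodule.subset_span (by simp))
      obtain ⟨A₂, hfg₂, hle₂, hg₂⟩ := point g hgmem
      refine ⟨A₁ ⊔ A₂, hfg₁.sup hfg₂, sup_le hle₁ hle₂, ?_⟩
      rw [Finset.coe_insert, Submodule.span_insert]
      refine sup_le ?_ ?_
      · exact (Submodule.span_singleton_le_iff_mem _ _).2
          (mul_le_mul_left (le_sup_right : A₂ ≤ A₁ ⊔ A₂) B hg₂)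
      · exact hG₁.trans (mul_le_mul_left le_sup_left _)

end Gen

section Frac

variable {R : Type*} [CommRing R] [IsDomain R]

lemma algInj : Function.Injective (algebraMap R (FractionRing R)) :=
  IsFractionRing.injective R (FractionRing R)

lemma mem_idealToFrac {I : Ideal R} {y : FractionRing R} :
    y ∈ idealToFrac R I ↔ ∃ i ∈ I, algebraMap R (FractionRing R) i = y := by
  simp [idealToFrac, Submodule.mem_map, Algebra.linearMap_apply]

lemma algebraMap_mem_idealToFrac {I : Ideal R} {a : R} (ha : a ∈ I) :
    algebraMap R (FractionRing R) a ∈ idealToFrac R I :=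
  mem_idealToFrac.2 ⟨a, ha, rfl⟩

lemma mem_of_algebraMap_mem_idealToFrac {I : Ideal R} {a : R}
    (ha : algebraMap R (FractionRing R) a ∈ idealToFrac R I) : a ∈ I := by
  obtain ⟨i, hi, hia⟩ := mem_idealToFrac.1 ha
  rwa [← algInj hia]

lemma idealToFrac_le_one (I : Ideal R) : idealToFrac R I ≤ 1 := by
  rw [Submodule.one_eq_range]
  rintro y hy
  obtain ⟨i, _, rfl⟩ := Submodule.mem_map.1 hy
  exact LinearMap.mem_range.2 ⟨i, rfl⟩

lemma idealToFrac_mono {I J : Ideal R} (h : I ≤ J) : idealToFrac R I ≤ idealToFrac R J :=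
  Submodule.map_mono h

lemma idealToFrac_comap {A : Submodule R (FractionRing R)} (hA : A ≤ 1) :
    idealToFrac R (Submodule.comap (Algebra.linearMap R (FractionRing R)) A) = A := by
  unfold idealToFrac
  rw [Submodule.map_comap_eq, ← Submodule.one_eq_range]
  exact inf_eq_right.2 hA

lemma mem_locSub {S : Submonoid R} {I : Submodule R (FractionRing R)} {y : FractionRing R} :
    y ∈ locSub R S I ↔ ∃ s ∈ S, (s : R) • y ∈ I := Iff.rfl

/-- Every proper nonzero `t`-ideal is contained in a `t`-maximal ideal. -/
lemma exists_tMaximal (T' : Ideal R) (hT : IsTIdeal R T') (htop : T' ≠ ⊤) (hbot : T' ≠ ⊥) :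
    ∃ N : Ideal R, IsTMaximal R N ∧ T' ≤ N := by
  set S : Set (Ideal R) := {B | IsTIdeal R B ∧ B ≠ ⊤ ∧ T' ≤ B} with hSdef
  have hTS : T' ∈ S := ⟨hT, htop, le_rfl⟩
  have hub : ∀ c ⊆ S, IsChain (· ≤ ·) c → ∀ y ∈ c, ∃ ub ∈ S, ∀ z ∈ c, z ≤ ub := by
    intro c hcS hchain y hy
    refine ⟨sSup c, ⟨?_, ?_, (hcS hy).2.2.trans (le_sSup hy)⟩, fun z hz => le_sSup hz⟩
    · show tOp R (FractionRing R) (idealToFrac R (sSup c)) = idealToFrac R (sSup c)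
      refine le_antisymm (tOp_le fun G hG0 hGfg hGle => ?_) (le_tOp _)
      have hmap : idealToFrac R (sSup c) = sSup ((fun B => idealToFrac R B) '' c) := by
        unfold idealToFrac
        rw [(Submodule.gc_map_comap (Algebra.linearMap R (FractionRing R))).l_sSup, sSup_image]
      rw [hmap] at hGle ⊢
      have hdir : DirectedOn (· ≤ ·) ((fun B => idealToFrac R B) '' c) := by
        rintro _ ⟨B₁, h1, rfl⟩ _ ⟨B₂, h2, rfl⟩
        rcases eq_or_ne B₁ B₂ with rfl | hne
        · exact ⟨idealToFrac R B₁, ⟨B₁, h1, rfl⟩, le_rfl, le_rfl⟩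
        rcases hchain h1 h2 hne with h | h
        · exact ⟨idealToFrac R B₂, ⟨B₂, h2, rfl⟩, idealToFrac_mono h, le_rfl⟩
        · exact ⟨idealToFrac R B₁, ⟨B₁, h1, rfl⟩, le_rfl, idealToFrac_mono h⟩
      obtain ⟨_, ⟨B, hBc, rfl⟩, hGB⟩ :=
        (CompleteLattice.isCompactElement_iff_le_of_directed_sSup_le
          (Submodule R (FractionRing R)) G).1 ((Submodule.fg_iff_compact G).1 hGfg)
          ((fun B => idealToFrac R B) '' c)
          ⟨idealToFrac R y, ⟨y, hy, rfl⟩⟩ hdir hGle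
      have hBt : tOp R (FractionRing R) (idealToFrac R B) = idealToFrac R B := (hcS hBc).1
      calc vOp R (FractionRing R) G ≤ tOp R (FractionRing R) (idealToFrac R B) :=
            vOp_le_tOp hG0 hGfg hGB
        _ = idealToFrac R B := hBt
        _ ≤ sSup ((fun B => idealToFrac R B) '' c) := le_sSup ⟨B, hBc, rfl⟩
    · intro htop'
      have h1R : (1 : R) ∈ sSup c := htop' ▸ Submodule.mem_top
      obtain ⟨B, hBc, hB1⟩ := (Submodule.mem_sSup_of_directed ⟨y, hy⟩ hchain.directedOn).1 h1R
      exact (hcS hBc).2.1 ((Ideal.eq_top_iff_one B).2 hB1)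
  obtain ⟨N, hTN, hNS, hNmax⟩ := zorn_le_nonempty₀ S hub T' hTS
  have hNT : IsTIdeal R N := hNS.1
  have hNtop : N ≠ ⊤ := hNS.2.1
  have hNT' : tOp R (FractionRing R) (idealToFrac R N) = idealToFrac R N := hNT
  have hprime : N.IsPrime := by
    refine ⟨hNtop, ?_⟩
    intro a b hab
    by_contra hcon
    push_neg at hcon
    obtain ⟨haN, hbN⟩ := hcon
    rcases eq_or_ne a 0 with rfl | ha0
    · exact haN N.zero_mem
    set B : Ideal R := N ⊔ Ideal.span {b} with hBdef
    set Bt : Ideal R :=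
      Submodule.comap (Algebra.linearMap R (FractionRing R))
        (tOp R (FractionRing R) (idealToFrac R B)) with hBtdef
    have hBle1 : tOp R (FractionRing R) (idealToFrac R B) ≤ 1 := tOp_le_one (idealToFrac_le_one B)
    have hFBt : idealToFrac R Bt = tOp R (FractionRing R) (idealToFrac R B) :=
      idealToFrac_comap hBle1
    have hNBt : N ≤ Bt := fun n hn =>
      mem_tOp_of_mem (algebraMap_mem_idealToFrac (Ideal.mem_sup_left hn))
    have hbBt : b ∈ Bt :=
      mem_tOp_of_mem (algebraMap_mem_idealToFrac
        (Ideal.mem_sup_right (Ideal.subset_span rfl)))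
    have hBtT : Bt = ⊤ := by
      by_contra hne
      have hBtS : Bt ∈ S := by
        refine ⟨?_, hne, hNS.2.2.trans hNBt⟩
        show tOp R (FractionRing R) (idealToFrac R Bt) = idealToFrac R Bt
        rw [hFBt]
        exact tOp_idem _
      exact hbN (hNmax hBtS hNBt hbBt)
    have h1R : (1 : R) ∈ Bt := by rw [hBtT]; trivial
    have h1 : (1 : FractionRing R) ∈ tOp R (FractionRing R) (idealToFrac R B) := by
      simpa using Submodule.mem_comap.1 h1R
    obtain ⟨G, hG0, hGfg, hGle, h1v⟩ := exists_of_mem_tOp h1 one_ne_zero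
    have haK : algebraMap R (FractionRing R) a ≠ 0 := fun h =>
      ha0 (algInj (by rw [h, map_zero]))
    have hmul : Submodule.span R {algebraMap R (FractionRing R) a} * idealToFrac R B ≤
        idealToFrac R N := by
      rw [Submodule.mul_le]
      rintro y hy z hz
      obtain ⟨s, rfl⟩ := Submodule.mem_span_singleton.1 hy
      obtain ⟨i, hi, rfl⟩ := mem_idealToFrac.1 hz
      obtain ⟨n, hn, w, hw, rfl⟩ := Submodule.mem_sup.1 hi
      obtain ⟨c, rfl⟩ := Ideal.mem_span_singleton'.1 hw
      have hai : a * (n + c * b) ∈ N := by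
        have h1' : a * n ∈ N := N.mul_mem_left a hn
        have h2' : a * (c * b) ∈ N := by
          have := N.mul_mem_left c hab
          rwa [show c * (a * b) = a * (c * b) by ring] at this
        have := N.add_mem h1' h2'
        rwa [← mul_add] at this
      rw [smul_mul_assoc, ← map_mul]
      exact Submodule.smul_mem _ s (algebraMap_mem_idealToFrac hai)
    have hs0 : Submodule.span R {algebraMap R (FractionRing R) a} * G ≠ ⊥ := by
      obtain ⟨g, hg, hg0⟩ := (Submodule.ne_bot_iff G).1 hG0
      refine (Submodule.ne_bot_iff _).2 ⟨algebraMap R (FractionRing R) a * g,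
        Submodule.mul_mem_mul (Submodule.mem_span_singleton_self _) hg, mul_ne_zero haK hg0⟩
    have hsfg : (Submodule.span R {algebraMap R (FractionRing R) a} * G).FG :=
      (Submodule.fg_span_singleton _).mul hGfg
    have hsle : Submodule.span R {algebraMap R (FractionRing R) a} * G ≤ idealToFrac R N :=
      (mul_le_mul_right hGle _).trans hmul
    have hav : algebraMap R (FractionRing R) a ∈
        vOp R (FractionRing R) (Submodule.span R {algebraMap R (FractionRing R) a} * G) := by
      have := Submodule.mul_mem_mul
        (Submodule.mem_span_singleton_self (algebraMap R (FractionRing R) a)) h1v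
      rw [mul_one] at this
      exact span_mul_vOp_le _ _ this
    have : algebraMap R (FractionRing R) a ∈ idealToFrac R N := by
      have h' := vOp_le_tOp hs0 hsfg hsle hav
      rwa [hNT'] at h'
    exact haN (mem_of_algebraMap_mem_idealToFrac this)
  refine ⟨N, ⟨?_, hNtop, hprime, hNT, ?_⟩, hNS.2.2⟩
  · intro h
    exact hbot (le_bot_iff.1 (h ▸ hNS.2.2))
  · intro J hJtop hJT hNJ
    exact le_antisymm (hNmax ⟨hJT, hJtop, hNS.2.2.trans hNJ⟩ hNJ) hNJ

lemma valuation_dichotomy (M : Ideal R) [hp : M.IsPrime]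
    [hd : IsDomain (Localization.AtPrime M)] [hv : ValuationRing (Localization.AtPrime M)]
    (x : FractionRing R) :
    x ∈ locSub R M.primeCompl (1 : Submodule R (FractionRing R)) ∨
      ∃ t : R, t ∉ M ∧ ∃ r : R,
        algebraMap R (FractionRing R) r * x = algebraMap R (FractionRing R) t := by
  obtain ⟨⟨a, b⟩, hsurj⟩ := IsLocalization.surj (nonZeroDivisors R) x
  dsimp only at hsurj
  set A := Localization.AtPrime M with hA
  obtain ⟨c, hc⟩ := ValuationRing.cond (algebraMap R A a) (algebraMap R A (b : R))
  obtain ⟨⟨r, s⟩, hcs⟩ := IsLocalization.surj M.primeCompl c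
  dsimp only at hcs
  have hbK : algebraMap R (FractionRing R) (b : R) ≠ 0 := fun h =>
    nonZeroDivisors.ne_zero b.2 (algInj (by rw [h, map_zero]))
  rcases hc with h | h
  · have heq : algebraMap R A (a * r) = algebraMap R A ((b : R) * (s : R)) := by
      rw [map_mul, map_mul, ← hcs, ← mul_assoc, h]
    obtain ⟨u, hu⟩ := (IsLocalization.eq_iff_exists M.primeCompl A).1 heq
    refine Or.inr ⟨(u : R) * (s : R), Submonoid.mul_mem _ u.2 s.2, (u : R) * r, ?_⟩
    apply mul_right_cancel₀ hbK
    have e1 : ((u : R) * r) * a = ((u : R) * (s : R)) * (b : R) := by linear_combination hu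
    calc algebraMap R (FractionRing R) ((u : R) * r) * x * algebraMap R (FractionRing R) (b : R)
        = algebraMap R (FractionRing R) ((u : R) * r) * algebraMap R (FractionRing R) a := by
          rw [mul_assoc, hsurj]
      _ = algebraMap R (FractionRing R) (((u : R) * r) * a) := (map_mul _ _ _).symm
      _ = algebraMap R (FractionRing R) (((u : R) * (s : R)) * (b : R)) := by rw [e1]
      _ = algebraMap R (FractionRing R) ((u : R) * (s : R)) *
            algebraMap R (FractionRing R) (b : R) := map_mul _ _ _
  · have heq : algebraMap R A ((b : R) * r) = algebraMap R A (a * (s : R)) := by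
      rw [map_mul, map_mul, ← hcs, ← mul_assoc, h]
    obtain ⟨u, hu⟩ := (IsLocalization.eq_iff_exists M.primeCompl A).1 heq
    refine Or.inl (mem_locSub.2 ⟨(u : R) * (s : R), Submonoid.mul_mem _ u.2 s.2, ?_⟩)
    have e2 : algebraMap R (FractionRing R) ((u : R) * (s : R)) * x =
        algebraMap R (FractionRing R) ((u : R) * r) := by
      apply mul_right_cancel₀ hbK
      calc algebraMap R (FractionRing R) ((u : R) * (s : R)) * x *
            algebraMap R (FractionRing R) (b : R)
          = algebraMap R (FractionRing R) ((u : R) * (s : R)) *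
              algebraMap R (FractionRing R) a := by rw [mul_assoc, hsurj]
        _ = algebraMap R (FractionRing R) (((u : R) * (s : R)) * a) := (map_mul _ _ _).symm
        _ = algebraMap R (FractionRing R) (((u : R) * r) * (b : R)) := by
            rw [show ((u : R) * (s : R)) * a = ((u : R) * r) * (b : R) by linear_combination -hu]
        _ = algebraMap R (FractionRing R) ((u : R) * r) *
              algebraMap R (FractionRing R) (b : R) := map_mul _ _ _
    rw [Algebra.smul_def, e2, Submodule.one_eq_range]
    exact ⟨(u : R) * r, rfl⟩

end Frac

/-- **Lemma 3.8.** Let `R` be a PVMD which is Clifford `t`-regular and `M` a `t`-maximal ideal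
of `R`. If `M ∈ T_t(R)`, then there exists a nonzero finitely generated ideal `I ⊆ M` such
that `M` is the only `t`-maximal ideal of `R` containing `I`. -/
theorem exists_fg_unique_tMaximal_of_inTt (R : Type*) [CommRing R] [IsDomain R]
    (hR : IsPVMD R) (hC : IsCliffordTRegular R) (M : Ideal R) (hM : InTt R M) :
    ∃ I : Ideal R, I ≠ ⊥ ∧ I.FG ∧ I ≤ M ∧
      ∀ N : Ideal R, IsTMaximal R N → I ≤ N → N = M := by
  classical
  obtain ⟨hTM, hni⟩ := hM
  rw [SetLike.not_le_iff_exists] at hni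
  obtain ⟨x, hxinf, hxM⟩ := hni
  haveI hMp : M.IsPrime := hTM.isPrime
  have hinj : Function.Injective (algebraMap R (FractionRing R)) := algInj
  set J : Ideal R :=
    Submodule.comap (Algebra.linearMap R (FractionRing R))
      (Submodule.comap (LinearMap.mulRight R x) (1 : Submodule R (FractionRing R))) with hJdef
  have hmemJ : ∀ r : R, r ∈ J ↔
      algebraMap R (FractionRing R) r * x ∈ (1 : Submodule R (FractionRing R)) := by
    intro r
    simp [hJdef, Submodule.mem_comap, LinearMap.mulRight_apply]
  have hJM : J ≤ M := by
    intro r hr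
    by_contra hrM
    exact hxM (mem_locSub.2 ⟨r, hrM, by rw [Algebra.smul_def]; exact (hmemJ r).1 hr⟩)
  have hJN : ∀ N : Ideal R, ∀ hN : IsTMaximal R N, N ≠ M → ∃ s, s ∈ J ∧ s ∉ N := by
    intro N hN hne
    have hx : x ∈ locSub R (@Ideal.primeCompl R _ N hN.isPrime)
        (1 : Submodule R (FractionRing R)) :=
      (Submodule.mem_iInf _).1 hxinf ⟨N, hN, hne⟩
    obtain ⟨s, hsN, hsx⟩ := mem_locSub.1 hx
    exact ⟨s, (hmemJ s).2 (by rwa [← Algebra.smul_def]), hsN⟩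
  have hx0 : x ≠ 0 := fun h => hxM (h ▸ zero_mem _)
  obtain ⟨⟨a0, b0⟩, hsurj⟩ := IsLocalization.surj (nonZeroDivisors R) x
  dsimp only at hsurj
  have hbJ : (b0 : R) ∈ J := (hmemJ _).2 (by
    rw [mul_comm, hsurj, Submodule.one_eq_range]
    exact ⟨a0, rfl⟩)
  have hb0 : (b0 : R) ≠ 0 := nonZeroDivisors.ne_zero b0.2
  have hH1 : idealToFrac R J ≤ 1 := idealToFrac_le_one J
  have hxdiv : x ∈ (1 : Submodule R (FractionRing R)) / idealToFrac R J := by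
    refine Submodule.mem_div_iff_forall_mul_mem.2 fun h hh => ?_
    obtain ⟨j, hj, rfl⟩ := mem_idealToFrac.1 hh
    rw [mul_comm]
    exact (hmemJ j).1 hj
  have hmul_le_one : idealToFrac R J * ((1 : Submodule R (FractionRing R)) / idealToFrac R J)
      ≤ 1 := by
    rw [Submodule.mul_le]
    intro m hm n hn
    have := Submodule.mem_div_iff_forall_mul_mem.1 hn m hm
    rwa [mul_comm] at this
  have hone_div : (1 : FractionRing R) ∈ (1 : Submodule R (FractionRing R)) / idealToFrac R J :=
    Submodule.mem_div_iff_forall_mul_mem.2 fun h hh => by rw [one_mul]; exact hH1 hh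
  have hHle : ∀ {h : FractionRing R}, h ∈ idealToFrac R J →
      h ∈ idealToFrac R J * ((1 : Submodule R (FractionRing R)) / idealToFrac R J) := by
    intro h hh
    have := Submodule.mul_mem_mul hh hone_div
    rwa [mul_one] at this
  have hT1 : tOp R (FractionRing R)
      (idealToFrac R J * ((1 : Submodule R (FractionRing R)) / idealToFrac R J)) = 1 := by
    have hTle := tOp_le_one hmul_le_one
    by_contra hne
    set T' : Ideal R := Submodule.comap (Algebra.linearMap R (FractionRing R))
      (tOp R (FractionRing R)
        (idealToFrac R J * ((1 : Submodule R (FractionRing R)) / idealToFrac R J))) with hT'def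
    have hFT' : idealToFrac R T' = tOp R (FractionRing R)
        (idealToFrac R J * ((1 : Submodule R (FractionRing R)) / idealToFrac R J)) :=
      idealToFrac_comap hTle
    have hT'T : IsTIdeal R T' := by
      show tOp R (FractionRing R) (idealToFrac R T') = idealToFrac R T'
      rw [hFT']
      exact tOp_idem _
    have hT'top : T' ≠ ⊤ := by
      intro h
      apply hne
      rw [← hFT', h]
      unfold idealToFrac
      rw [Submodule.map_top, ← Submodule.one_eq_range]
    have hJT' : J ≤ T' := by
      intro j hj
      rw [hT'def]
      exact Submodule.mem_comap.2 (mem_tOp_of_mem (hHle (algebraMap_mem_idealToFrac hj)))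
    have hT'bot : T' ≠ ⊥ := by
      intro h
      apply hb0
      have : (b0 : R) ∈ T' := hJT' hbJ
      rwa [h, Submodule.mem_bot] at this
    obtain ⟨N, hN, hT'N⟩ := exists_tMaximal T' hT'T hT'top hT'bot
    have hNM : N = M := by
      by_contra hne'
      obtain ⟨s, hsJ, hsN⟩ := hJN N hN hne'
      exact hsN ((hJT'.trans hT'N) hsJ)
    rw [hNM] at hT'N
    have hTM' : tOp R (FractionRing R)
        (idealToFrac R J * ((1 : Submodule R (FractionRing R)) / idealToFrac R J))
        ≤ idealToFrac R M := by
      rw [← hFT']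
      exact idealToFrac_mono hT'N
    haveI : IsDomain (Localization.AtPrime M) :=
      IsLocalization.isDomain_of_local_atPrime hTM.isPrime
    haveI : ValuationRing (Localization.AtPrime M) := hR M hTM
    rcases valuation_dichotomy M x with hc | ⟨t, htM, r, hrt⟩
    · exact hxM hc
    · have hrJ : r ∈ J := (hmemJ r).2 (by
        rw [hrt, Submodule.one_eq_range]
        exact ⟨t, rfl⟩)
      have htmem : algebraMap R (FractionRing R) t ∈ idealToFrac R M := by
        apply hTM'
        apply mem_tOp_of_mem
        rw [← hrt]
        exact Submodule.mul_mem_mul (algebraMap_mem_idealToFrac hrJ) hxdiv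
      exact htM (mem_of_algebraMap_mem_idealToFrac htmem)
  have h1T : (1 : FractionRing R) ∈ tOp R (FractionRing R)
      (idealToFrac R J * ((1 : Submodule R (FractionRing R)) / idealToFrac R J)) := by
    rw [hT1]
    exact one_mem_one'
  obtain ⟨G₀, hG0, hGfg, hGle, h1v⟩ := exists_of_mem_tOp h1T one_ne_zero
  obtain ⟨A', hA'fg, hA'le, hGA'⟩ := exists_fg_factor hGfg hGle
  set H₀ : Submodule R (FractionRing R) :=
    A' ⊔ Submodule.span R {algebraMap R (FractionRing R) (b0 : R)} with hH₀def
  have hH₀fg : H₀.FG := hA'fg.sup (Submodule.fg_span_singleton _)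
  have hbK0 : algebraMap R (FractionRing R) (b0 : R) ≠ 0 := fun h =>
    hb0 (hinj (by rw [h, map_zero]))
  have hH₀0 : H₀ ≠ ⊥ := by
    intro h
    apply hbK0
    have : algebraMap R (FractionRing R) (b0 : R) ∈ H₀ :=
      Submodule.mem_sup_right (Submodule.mem_span_singleton_self _)
    rwa [h, Submodule.mem_bot] at this
  have hH₀le : H₀ ≤ idealToFrac R J :=
    sup_le hA'le ((Submodule.span_singleton_le_iff_mem _ _).2 (algebraMap_mem_idealToFrac hbJ))
  have hG₀H₀ : G₀ ≤ H₀ * ((1 : Submodule R (FractionRing R)) / idealToFrac R J) :=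
    hGA'.trans (mul_le_mul_left le_sup_left _)
  have h1v' : (1 : FractionRing R) ∈
      vOp R (FractionRing R) (H₀ * ((1 : Submodule R (FractionRing R)) / idealToFrac R J)) :=
    vOp_mono hG₀H₀ h1v
  have hkey : idealToFrac R J ≤ vOp R (FractionRing R) H₀ := by
    intro z hz
    refine Submodule.mem_div_iff_forall_mul_mem.2 fun w hw => ?_
    have hzw : z * w ∈ (1 : Submodule R (FractionRing R)) /
        (H₀ * ((1 : Submodule R (FractionRing R)) / idealToFrac R J)) := by
      refine Submodule.mem_div_iff_forall_mul_mem.2 fun u hu => ?_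
      refine Submodule.mul_induction_on hu ?_ ?_
      · intro h₀ hh₀ k hk
        have h1' : w * h₀ ∈ (1 : Submodule R (FractionRing R)) :=
          Submodule.mem_div_iff_forall_mul_mem.1 hw h₀ hh₀
        have h2' : k * z ∈ (1 : Submodule R (FractionRing R)) :=
          Submodule.mem_div_iff_forall_mul_mem.1 hk z hz
        have := mul_mem_one h1' h2'
        rwa [show w * h₀ * (k * z) = z * w * (h₀ * k) by ring] at this
      · intro u v huv hv
        rw [mul_add]
        exact add_mem huv hv
    have := Submodule.mem_div_iff_forall_mul_mem.1 h1v' _ hzw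
    rwa [one_mul] at this
  set I : Ideal R := Submodule.comap (Algebra.linearMap R (FractionRing R)) H₀ with hIdef
  have hFI : idealToFrac R I = H₀ := idealToFrac_comap (hH₀le.trans hH1)
  refine ⟨I, ?_, ?_, ?_, ?_⟩
  · intro h
    apply hH₀0
    rw [← hFI, h]
    unfold idealToFrac
    exact Submodule.map_bot _
  · refine Submodule.fg_of_fg_map_injective (Algebra.linearMap R (FractionRing R)) ?_ ?_
    · intro p q hpq
      exact hinj hpq
    · show (idealToFrac R I).FG
      rw [hFI]
      exact hH₀fg
  · intro r hr
    apply hJM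
    rw [hIdef] at hr
    have hmem : algebraMap R (FractionRing R) r ∈ idealToFrac R J := hH₀le hr
    exact mem_of_algebraMap_mem_idealToFrac hmem
  · intro N hN hIN
    by_contra hne
    obtain ⟨s, hsJ, hsN⟩ := hJN N hN hne
    have hH₀N : H₀ ≤ idealToFrac R N := by
      rw [← hFI]
      exact idealToFrac_mono hIN
    have hvN : vOp R (FractionRing R) H₀ ≤ idealToFrac R N := by
      have h1 := vOp_le_tOp hH₀0 hH₀fg hH₀N
      have h2 : tOp R (FractionRing R) (idealToFrac R N) = idealToFrac R N := hN.isT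
      rwa [h2] at h1
    exact hsN (mem_of_algebraMap_mem_idealToFrac (hvN (hkey (algebraMap_mem_idealToFrac hsJ))))
end
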